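/- arXiv:2108.10962 — 3 statements merged into one kernel-verified Lean document; each statement's English description precedes it below -/
import Mathlib

section
/- Let A, B, δ > 0 be constants and let f, g : [0,∞) → [0,∞) be measurable, locally integrable functions satisfying f(t₁) ≤ A·f(t₀) + B·∫_{t₀}^{t₁} (t₁−s)^{−1/2} (f(s) + g(s)) ds for all 0 ≤ t₀ ≤ t₁ ≤ t₀ + δ. Then for every T > 0 and every λ > (1/δ)·ln(A), setting κ := λ − (1/δ)·ln(A), one has (1 − 2δ^{1/2}B/(1 − A·e^{−λδ}))·∫₀^T e^{−λt} f(t) dt ≤ (A/κ)·f(0) + (2δ^{1/2}B/(1 − A·e^{−λδ}))·∫₀^T e^{−λt} g(t) dt. -/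
open MeasureTheory Real Set ENNReal

private lemma lint_translate (c : ℝ) (s : Set ℝ) (h : ℝ → ℝ≥0∞) :
    ∫⁻ x in ((fun x => x + c) ⁻¹' s), h (x + c) = ∫⁻ x in s, h x :=
  MeasurePreserving.setLIntegral_comp_preimage_emb
    ⟨measurable_add_const c, map_add_right_eq_self volume c⟩
    (measurableEmbedding_addRight c) h s

private lemma kern_int {δ : ℝ} (hδ : 0 < δ) (s : ℝ) :
    ∫⁻ t in Ioc s (s + δ), ENNReal.ofReal ((t - s) ^ (-(1:ℝ)/2))
      = ENNReal.ofReal (2 * δ ^ ((1:ℝ)/2)) := by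
  have hpre : (fun x => x + s) ⁻¹' Ioc s (s + δ) = Ioc 0 δ := by
    ext x; simp only [mem_preimage, mem_Ioc]
    constructor <;> intro h <;> exact ⟨by linarith [h.1], by linarith [h.2]⟩
  have := lint_translate s (Ioc s (s + δ)) (fun t => ENNReal.ofReal ((t - s) ^ (-(1:ℝ)/2)))
  rw [hpre] at this
  rw [← this]
  have h1 : ∀ x : ℝ, ENNReal.ofReal ((x + s - s) ^ (-(1:ℝ)/2)) = ENNReal.ofReal (x ^ (-(1:ℝ)/2)) := by
    intro x; rw [add_sub_cancel_right]
  simp only [h1]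
  have hint : IntegrableOn (fun x : ℝ => x ^ (-(1:ℝ)/2)) (Ioc 0 δ) := by
    have := (intervalIntegral.intervalIntegrable_rpow' (a := 0) (b := δ) (r := -(1:ℝ)/2) (by norm_num))
    rw [intervalIntegrable_iff, uIoc_of_le hδ.le] at this
    exact this
  rw [← ofReal_integral_eq_lintegral_ofReal hint]
  · congr 1
    rw [← intervalIntegral.integral_of_le hδ.le]
    rw [integral_rpow (Or.inl (by norm_num))]
    rw [Real.zero_rpow (by norm_num)]
    norm_num
    ring
  · filter_upwards [ae_restrict_mem measurableSet_Ioc] with x hx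
    exact Real.rpow_nonneg hx.1.le _

private lemma exp_int {κ : ℝ} (hκ : 0 < κ) (δ : ℝ) :
    ∫ t in (0:ℝ)..δ, Real.exp (-κ * t) = (1 - Real.exp (-κ * δ)) / κ := by
  have hd : ∀ t : ℝ, HasDerivAt (fun u => -(1/κ) * Real.exp (-κ * u)) (Real.exp (-κ * t)) t := by
    intro t
    have h1 : HasDerivAt (fun u : ℝ => -κ * u) (-κ) t := by
      simpa using (hasDerivAt_id t).const_mul (-κ)
    have h2 := (h1.exp).const_mul (-(1/κ))
    exact h2.congr_deriv (by field_simp [hκ.ne'])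
  rw [intervalIntegral.integral_eq_sub_of_hasDerivAt (fun t _ => hd t)
    (Continuous.intervalIntegrable (by continuity) _ _)]
  simp only [mul_zero, neg_zero, Real.exp_zero]
  field_simp
  ring

set_option maxHeartbeats 1000000 in
private lemma term1_bound (A δ T lam κ : ℝ) (hA : 0 < A) (hδ : 0 < δ) (hT : 0 < T)
    (hκ : 0 < κ) (hκlam : κ ≤ lam)
    (hE : A * Real.exp (-lam * δ) = Real.exp (-κ * δ))
    (f : ℝ → ℝ) (hfm : Measurable f) (hf0 : ∀ t, 0 ≤ f t) :
    ∫⁻ t in Ioc 0 T, ENNReal.ofReal (A * (Real.exp (-lam * t) * f (max (t - δ) 0)))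
      ≤ ENNReal.ofReal (A * f 0 * ((1 - Real.exp (-κ * δ)) / κ))
        + ENNReal.ofReal (Real.exp (-κ * δ)) *
            ∫⁻ t in Ioc 0 T, ENNReal.ofReal (Real.exp (-lam * t) * f t) := by
  have hmF : Measurable fun t : ℝ => ENNReal.ofReal (Real.exp (-lam * t) * f t) :=
    ((Real.measurable_exp.comp (measurable_id.const_mul (-lam))).mul hfm).ennreal_ofReal
  have hsplit : ∫⁻ t in Ioc 0 T, ENNReal.ofReal (A * (Real.exp (-lam * t) * f (max (t - δ) 0)))
      = (∫⁻ t in Ioc 0 (min δ T), ENNReal.ofReal (A * (Real.exp (-lam * t) * f (max (t - δ) 0))))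
        + ∫⁻ t in Ioc (min δ T) T, ENNReal.ofReal (A * (Real.exp (-lam * t) * f (max (t - δ) 0))) := by
    rw [← lintegral_union measurableSet_Ioc (Ioc_disjoint_Ioc_of_le le_rfl),
      Ioc_union_Ioc_eq_Ioc (le_min hδ.le hT.le) (min_le_right _ _)]
  rw [hsplit]
  refine add_le_add ?_ ?_
  · -- first piece
    calc ∫⁻ t in Ioc 0 (min δ T), ENNReal.ofReal (A * (Real.exp (-lam * t) * f (max (t - δ) 0)))
        ≤ ∫⁻ t in Ioc 0 (min δ T), ENNReal.ofReal (A * f 0 * Real.exp (-κ * t)) := by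
          refine lintegral_mono_ae ((ae_restrict_iff' measurableSet_Ioc).2 (ae_of_all _ ?_))
          intro t ht
          have htδ : t ≤ δ := ht.2.trans (min_le_left _ _)
          have hmax : max (t - δ) 0 = 0 := max_eq_right (by linarith)
          rw [hmax]
          apply ENNReal.ofReal_le_ofReal
          have hexp : Real.exp (-lam * t) ≤ Real.exp (-κ * t) :=
            Real.exp_le_exp.2 (by nlinarith [ht.1.le])
          nlinarith [hf0 0, hA.le, Real.exp_pos (-lam * t), mul_le_mul_of_nonneg_left hexp (hf0 0)]
      _ ≤ ∫⁻ t in Ioc 0 δ, ENNReal.ofReal (A * f 0 * Real.exp (-κ * t)) :=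
          lintegral_mono_set (Ioc_subset_Ioc_right (min_le_left _ _))
      _ = ENNReal.ofReal (A * f 0 * ((1 - Real.exp (-κ * δ)) / κ)) := by
          rw [← ofReal_integral_eq_lintegral_ofReal]
          · rw [integral_const_mul, ← intervalIntegral.integral_of_le hδ.le, exp_int hκ δ]
          · exact (Continuous.integrableOn_Ioc (by continuity))
          · exact ae_of_all _ fun x => mul_nonneg (mul_nonneg hA.le (hf0 0)) (Real.exp_pos _).le
  · -- second piece
    rcases le_or_gt T δ with hTδ | hδT
    · rw [min_eq_right hTδ, Ioc_self]
      simp only [Measure.restrict_empty, lintegral_zero_measure]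
      exact zero_le
    · rw [min_eq_left hδT.le]
      have hcongr : ∫⁻ t in Ioc δ T, ENNReal.ofReal (A * (Real.exp (-lam * t) * f (max (t - δ) 0)))
          = ∫⁻ t in Ioc δ T, ENNReal.ofReal (A * (Real.exp (-lam * t) * f (t - δ))) :=
        setLIntegral_congr_fun measurableSet_Ioc (fun t ht => by
          rw [max_eq_left (by linarith [ht.1])])
      rw [hcongr]
      have hpre : (fun x => x + δ) ⁻¹' Ioc δ T = Ioc 0 (T - δ) := by
        ext x; simp only [mem_preimage, mem_Ioc]
        constructor <;> intro h <;> exact ⟨by linarith [h.1], by linarith [h.2]⟩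
      have htr := lint_translate δ (Ioc δ T)
        (fun t => ENNReal.ofReal (A * (Real.exp (-lam * t) * f (t - δ))))
      rw [hpre] at htr
      rw [← htr]
      calc ∫⁻ x in Ioc 0 (T - δ), ENNReal.ofReal (A * (Real.exp (-lam * (x + δ)) * f (x + δ - δ)))
          = ∫⁻ x in Ioc 0 (T - δ),
              ENNReal.ofReal (Real.exp (-κ * δ)) * ENNReal.ofReal (Real.exp (-lam * x) * f x) := by
            refine setLIntegral_congr_fun measurableSet_Ioc (fun x hx => ?_)
            rw [← ENNReal.ofReal_mul (Real.exp_pos _).le]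
            congr 1
            rw [add_sub_cancel_right, show -lam * (x + δ) = -lam * δ + -lam * x by ring,
              Real.exp_add, ← hE]
            ring
        _ = ENNReal.ofReal (Real.exp (-κ * δ)) *
              ∫⁻ x in Ioc 0 (T - δ), ENNReal.ofReal (Real.exp (-lam * x) * f x) :=
            lintegral_const_mul _ hmF
        _ ≤ _ := mul_le_mul_right (lintegral_mono_set (Ioc_subset_Ioc_right (by linarith))) _

private lemma term2_bound (B δ T lam : ℝ) (hB : 0 < B) (hδ : 0 < δ) (hT : 0 < T)
    (hlam : 0 ≤ lam) (f g : ℝ → ℝ) (hfm : Measurable f) (hgm : Measurable g)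
    (hf0 : ∀ t, 0 ≤ f t) (hg0 : ∀ t, 0 ≤ g t) :
    (∫⁻ t in Ioc 0 T, ENNReal.ofReal (B * Real.exp (-lam * t)) *
        ∫⁻ s in Ioc (max (t - δ) 0) t, ENNReal.ofReal ((t - s) ^ (-(1:ℝ)/2) * (f s + g s)))
      ≤ ENNReal.ofReal (2 * δ ^ ((1:ℝ)/2) * B) *
        ((∫⁻ s in Ioc 0 T, ENNReal.ofReal (Real.exp (-lam * s) * f s))
          + ∫⁻ s in Ioc 0 T, ENNReal.ofReal (Real.exp (-lam * s) * g s)) := by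
  set Q : Set (ℝ × ℝ) := {q : ℝ × ℝ | 0 < q.1 ∧ q.1 ≤ T ∧ max (q.1 - δ) 0 < q.2 ∧ q.2 ≤ q.1}
    with hQdef
  set Ψ : ℝ × ℝ → ℝ≥0∞ := fun p =>
    Set.indicator Q (fun q => ENNReal.ofReal (B * Real.exp (-lam * q.1)) *
      ENNReal.ofReal ((q.1 - q.2) ^ (-(1:ℝ)/2) * (f q.2 + g q.2))) p with hΨdef
  have hQmem : ∀ t s : ℝ, ((t, s) ∈ Q) ↔ (0 < t ∧ t ≤ T ∧ max (t - δ) 0 < s ∧ s ≤ t) :=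
    fun t s => Iff.rfl
  have hΨmem : ∀ t s : ℝ, (t, s) ∈ Q → Ψ (t, s) = ENNReal.ofReal (B * Real.exp (-lam * t)) *
      ENNReal.ofReal ((t - s) ^ (-(1:ℝ)/2) * (f s + g s)) := by
    intro t s h
    rw [hΨdef]
    exact indicator_of_mem h _
  have hΨnot : ∀ t s : ℝ, (t, s) ∉ Q → Ψ (t, s) = 0 := by
    intro t s h
    rw [hΨdef]
    exact indicator_of_notMem h _
  have hQm : MeasurableSet Q := by
    apply MeasurableSet.inter
    · exact measurableSet_lt measurable_const measurable_fst
    apply MeasurableSet.inter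
    · exact measurableSet_le measurable_fst measurable_const
    apply MeasurableSet.inter
    · exact measurableSet_lt ((measurable_fst.sub measurable_const).max measurable_const)
        measurable_snd
    · exact measurableSet_le measurable_snd measurable_fst
  have hΨm : Measurable Ψ := by
    rw [hΨdef]
    apply Measurable.indicator ?_ hQm
    apply Measurable.mul (f := fun q : ℝ × ℝ => ENNReal.ofReal (B * Real.exp (-lam * q.1))) (g := fun q : ℝ × ℝ => ENNReal.ofReal ((q.1 - q.2) ^ (-(1:ℝ)/2) * (f q.2 + g q.2)))
    · exact (measurable_const.mul
        (Real.measurable_exp.comp (measurable_fst.const_mul (-lam)))).ennreal_ofReal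
    · exact (((measurable_fst.sub measurable_snd).pow measurable_const).mul
        ((hfm.comp measurable_snd).add (hgm.comp measurable_snd))).ennreal_ofReal
  have hinm : ∀ t : ℝ, Measurable fun s => ENNReal.ofReal ((t - s) ^ (-(1:ℝ)/2) * (f s + g s)) :=
    fun t => (((measurable_const.sub measurable_id).pow measurable_const).mul
      (hfm.add hgm)).ennreal_ofReal
  have hker : ∀ s : ℝ, Measurable fun t : ℝ => ENNReal.ofReal ((t - s) ^ (-(1:ℝ)/2)) :=
    fun s => (((measurable_id.sub measurable_const).pow measurable_const).ennreal_ofReal)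
  have hmf2 : Measurable fun s : ℝ => ENNReal.ofReal (Real.exp (-lam * s) * f s) :=
    ((Real.measurable_exp.comp (measurable_id.const_mul (-lam))).mul hfm).ennreal_ofReal
  have hmfg2 : Measurable fun s : ℝ => ENNReal.ofReal (Real.exp (-lam * s) * (f s + g s)) :=
    ((Real.measurable_exp.comp (measurable_id.const_mul (-lam))).mul (hfm.add hgm)).ennreal_ofReal
  have hiter : (∫⁻ t in Ioc 0 T, ENNReal.ofReal (B * Real.exp (-lam * t)) *
        ∫⁻ s in Ioc (max (t - δ) 0) t, ENNReal.ofReal ((t - s) ^ (-(1:ℝ)/2) * (f s + g s)))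
      = ∫⁻ t, ∫⁻ s, Ψ (t, s) := by
    rw [← lintegral_indicator measurableSet_Ioc]
    apply lintegral_congr
    intro t
    by_cases ht : t ∈ Ioc (0:ℝ) T
    · rw [indicator_of_mem ht]
      have hfun : (fun s => Ψ (t, s)) = (Ioc (max (t - δ) 0) t).indicator
          (fun s => ENNReal.ofReal (B * Real.exp (-lam * t)) *
            ENNReal.ofReal ((t - s) ^ (-(1:ℝ)/2) * (f s + g s))) := by
        funext s
        by_cases hs : s ∈ Ioc (max (t - δ) 0) t
        · rw [indicator_of_mem hs]
          exact hΨmem t s ((hQmem t s).2 ⟨ht.1, ht.2, hs.1, hs.2⟩)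
        · rw [indicator_of_notMem hs]
          exact hΨnot t s (fun hmem => hs ⟨((hQmem t s).1 hmem).2.2.1, ((hQmem t s).1 hmem).2.2.2⟩)
      rw [hfun, lintegral_indicator measurableSet_Ioc, lintegral_const_mul _ (hinm t)]
    · rw [indicator_of_notMem ht]
      have hz : ∀ s, Ψ (t, s) = 0 := fun s =>
        hΨnot t s (fun hmem => ht ⟨((hQmem t s).1 hmem).1, ((hQmem t s).1 hmem).2.1⟩)
      simp [hz]
  rw [hiter, lintegral_lintegral_swap hΨm.aemeasurable]
  have hbound : ∀ s : ℝ, (∫⁻ t, Ψ (t, s)) ≤ (Ioc 0 T).indicator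
      (fun s' => ENNReal.ofReal (2 * δ ^ ((1:ℝ)/2) * B) *
        ENNReal.ofReal (Real.exp (-lam * s') * (f s' + g s'))) s := by
    intro s
    by_cases hs : s ∈ Ioc (0:ℝ) T
    · rw [indicator_of_mem hs]
      calc (∫⁻ t, Ψ (t, s))
          ≤ ∫⁻ t, (Ioc s (s + δ)).indicator
              (fun t => ENNReal.ofReal (B * Real.exp (-lam * s) * (f s + g s)) *
                ENNReal.ofReal ((t - s) ^ (-(1:ℝ)/2))) t := by
            apply lintegral_mono
            intro t
            show Ψ (t, s) ≤ _
            by_cases hmem : (t, s) ∈ Q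
            · obtain ⟨h1, h2, h3, h4⟩ := (hQmem t s).1 hmem
              rcases eq_or_lt_of_le h4 with heq | hlt
              · have hzz : Ψ (t, s) = 0 := by
                  rw [hΨmem t s hmem, heq, sub_self, Real.zero_rpow (by norm_num), zero_mul]
                  simp
                rw [hzz]; exact zero_le
              · have htmem : t ∈ Ioc s (s + δ) :=
                  ⟨hlt, by linarith [le_max_left (t - δ) 0, h3]⟩
                rw [indicator_of_mem htmem, hΨmem t s hmem]
                rw [← ENNReal.ofReal_mul (mul_nonneg hB.le (Real.exp_pos (-lam * t)).le),
                  ← ENNReal.ofReal_mul (mul_nonneg (mul_nonneg hB.le (Real.exp_pos (-lam * s)).le)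
                    (add_nonneg (hf0 s) (hg0 s)))]
                apply ENNReal.ofReal_le_ofReal
                have hexp : Real.exp (-lam * t) ≤ Real.exp (-lam * s) :=
                  Real.exp_le_exp.2 (by nlinarith [hlt.le])
                have hrp : 0 ≤ (t - s) ^ (-(1:ℝ)/2) := Real.rpow_nonneg (by linarith) _
                nlinarith [hB.le, mul_le_mul_of_nonneg_right hexp
                  (mul_nonneg hrp (add_nonneg (hf0 s) (hg0 s)))]
            · rw [hΨnot t s hmem]; exact zero_le
        _ = ENNReal.ofReal (B * Real.exp (-lam * s) * (f s + g s)) *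
              ∫⁻ t in Ioc s (s + δ), ENNReal.ofReal ((t - s) ^ (-(1:ℝ)/2)) := by
            rw [lintegral_indicator measurableSet_Ioc, lintegral_const_mul _ (hker s)]
        _ = ENNReal.ofReal (B * Real.exp (-lam * s) * (f s + g s)) *
              ENNReal.ofReal (2 * δ ^ ((1:ℝ)/2)) := by rw [kern_int hδ s]
        _ = ENNReal.ofReal (2 * δ ^ ((1:ℝ)/2) * B) *
              ENNReal.ofReal (Real.exp (-lam * s) * (f s + g s)) := by
            rw [← ENNReal.ofReal_mul (mul_nonneg (mul_nonneg hB.le (Real.exp_pos (-lam * s)).le)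
                (add_nonneg (hf0 s) (hg0 s))),
              ← ENNReal.ofReal_mul (mul_nonneg (by positivity) hB.le)]
            congr 1
            ring
    · rw [indicator_of_notMem hs]
      have hz : ∀ t, Ψ (t, s) = 0 := by
        intro t
        apply hΨnot
        intro hmem
        obtain ⟨h1, h2, h3, h4⟩ := (hQmem t s).1 hmem
        exact hs ⟨lt_of_le_of_lt (le_max_right (t - δ) 0) h3, h4.trans h2⟩
      simp [hz]
  calc (∫⁻ s, ∫⁻ t, Ψ (t, s)) ≤ ∫⁻ s, (Ioc 0 T).indicator
        (fun s' => ENNReal.ofReal (2 * δ ^ ((1:ℝ)/2) * B) *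
          ENNReal.ofReal (Real.exp (-lam * s') * (f s' + g s'))) s := lintegral_mono hbound
    _ = ∫⁻ s in Ioc 0 T, ENNReal.ofReal (2 * δ ^ ((1:ℝ)/2) * B) *
          ENNReal.ofReal (Real.exp (-lam * s) * (f s + g s)) :=
        lintegral_indicator measurableSet_Ioc _
    _ = ENNReal.ofReal (2 * δ ^ ((1:ℝ)/2) * B) *
          ∫⁻ s in Ioc 0 T, ENNReal.ofReal (Real.exp (-lam * s) * (f s + g s)) :=
        lintegral_const_mul _ hmfg2
    _ = ENNReal.ofReal (2 * δ ^ ((1:ℝ)/2) * B) *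
        ((∫⁻ s in Ioc 0 T, ENNReal.ofReal (Real.exp (-lam * s) * f s))
          + ∫⁻ s in Ioc 0 T, ENNReal.ofReal (Real.exp (-lam * s) * g s)) := by
        congr 1
        rw [← lintegral_add_left hmf2]
        apply lintegral_congr
        intro s
        rw [← ENNReal.ofReal_add (mul_nonneg (Real.exp_pos _).le (hf0 s))
          (mul_nonneg (Real.exp_pos _).le (hg0 s))]
        congr 1
        ring

private lemma final_algebra {S G f0 A κ E c : ℝ} (hS : 0 ≤ S) (hG : 0 ≤ G) (hκ : 0 < κ)
    (hE1 : E < 1)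
    (h : S ≤ A * f0 * ((1 - E) / κ) + E * S + c * (S + G)) :
    (1 - c / (1 - E)) * S ≤ A / κ * f0 + c / (1 - E) * G := by
  have hD : 0 < 1 - E := by linarith
  have hne : (1 - E) ≠ 0 := hD.ne'
  have h1 : (1 - c / (1 - E)) * S * (1 - E) ≤ (A / κ * f0 + c / (1 - E) * G) * (1 - E) := by
    have e1 : (1 - c / (1 - E)) * S * (1 - E) = S * (1 - E) - c * S := by field_simp
    have e2 : (A / κ * f0 + c / (1 - E) * G) * (1 - E) = A * f0 * ((1 - E) / κ) + c * G := by
      field_simp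
    rw [e1, e2]
    nlinarith [h]
  exact le_of_mul_le_mul_right h1 hD

/-- An abstract Gronwall-type estimate for functions satisfying a
weakly singular integral inequality on short time intervals. -/
theorem stmt_0 (A B δ : ℝ) (hA : 0 < A) (hB : 0 < B) (hδ : 0 < δ)
    (f g : ℝ → ℝ) (hfm : Measurable f) (hgm : Measurable g)
    (hf0 : ∀ t, 0 ≤ f t) (hg0 : ∀ t, 0 ≤ g t)
    (hfl : LocallyIntegrableOn f (Ici 0)) (hgl : LocallyIntegrableOn g (Ici 0))
    (hineq : ∀ t₀ t₁ : ℝ, 0 ≤ t₀ → t₀ ≤ t₁ → t₁ ≤ t₀ + δ →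
      f t₁ ≤ A * f t₀ + B * ∫ s in t₀..t₁, ((t₁ - s) ^ (-(1:ℝ)/2)) * (f s + g s))
    (T lam : ℝ) (hT : 0 < T) (hlam : (1/δ) * Real.log A < lam) :
    (1 - 2 * δ ^ ((1:ℝ)/2) * B / (1 - A * Real.exp (-lam * δ))) *
        ∫ t in (0:ℝ)..T, Real.exp (-lam * t) * f t
      ≤ (A / (lam - (1/δ) * Real.log A)) * f 0
        + (2 * δ ^ ((1:ℝ)/2) * B / (1 - A * Real.exp (-lam * δ))) *
            ∫ t in (0:ℝ)..T, Real.exp (-lam * t) * g t := by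
  have hGnn : 0 ≤ ∫ t in (0:ℝ)..T, Real.exp (-lam * t) * g t :=
    intervalIntegral.integral_nonneg hT.le (fun x _ => mul_nonneg (Real.exp_pos _).le (hg0 x))
  have hEone : A * Real.exp (-lam * δ) < 1 := by
    have h1 : A * Real.exp (-lam * δ) = Real.exp (Real.log A + -lam * δ) := by
      rw [Real.exp_add, Real.exp_log hA]
    rw [h1, ← Real.exp_zero]
    apply Real.exp_lt_exp.2
    have h2 : Real.log A < lam * δ := by
      have := (div_lt_iff₀ hδ).1 (by rw [div_eq_mul_inv, mul_comm]; simpa [one_div] using hlam)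
      nlinarith [hlam, hδ]
    nlinarith
  have hD : 0 < 1 - A * Real.exp (-lam * δ) := by linarith
  rcases lt_or_ge A 1 with hA1 | hA1
  · -- trivial case: f ≡ 0 on [0, ∞)
    have hf00 : ∀ t : ℝ, 0 ≤ t → f t = 0 := by
      intro t ht
      have h := hineq t t ht le_rfl (by linarith)
      rw [intervalIntegral.integral_same, mul_zero, add_zero] at h
      nlinarith [hf0 t]
    have hz : ∫ t in (0:ℝ)..T, Real.exp (-lam * t) * f t = 0 := by
      have hEq : EqOn (fun t => Real.exp (-lam * t) * f t) (fun _ => (0:ℝ)) (uIcc 0 T) := by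
        intro x hx
        rw [uIcc_of_le hT.le] at hx
        simp [hf00 x hx.1]
      rw [intervalIntegral.integral_congr hEq, intervalIntegral.integral_zero]
    rw [hz, hf00 0 le_rfl, mul_zero, mul_zero, zero_add]
    exact mul_nonneg (div_nonneg (by positivity) hD.le) hGnn
  · -- main case : 1 ≤ A
    have hlog : 0 ≤ Real.log A := Real.log_nonneg hA1
    have hκpos : 0 < lam - 1/δ * Real.log A := sub_pos.2 hlam
    have hκlam : lam - 1/δ * Real.log A ≤ lam := by
      have h1 : 0 ≤ 1/δ * Real.log A := by positivity
      linarith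
    have hlam0 : 0 < lam := lt_of_le_of_lt (by positivity) hlam
    have hE : A * Real.exp (-lam * δ) = Real.exp (-(lam - 1/δ * Real.log A) * δ) := by
      rw [← Real.exp_log hA, ← Real.exp_add]
      congr 1
      field_simp
      rw [Real.log_exp]
      ring
    -- integrability
    have hIcc : Icc (0:ℝ) T ⊆ Ici 0 := fun x hx => hx.1
    have hfIoc : IntegrableOn f (Ioc 0 T) :=
      (hfl.integrableOn_compact_subset hIcc isCompact_Icc).mono_set Ioc_subset_Icc_self
    have hgIoc : IntegrableOn g (Ioc 0 T) :=
      (hgl.integrableOn_compact_subset hIcc isCompact_Icc).mono_set Ioc_subset_Icc_self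
    have hexpsm : AEStronglyMeasurable (fun x : ℝ => Real.exp (-lam * x))
        (volume.restrict (Ioc 0 T)) :=
      Continuous.aestronglyMeasurable (by continuity)
    have hexpb : ∀ᵐ x ∂(volume.restrict (Ioc (0:ℝ) T)), ‖Real.exp (-lam * x)‖ ≤ 1 := by
      filter_upwards [ae_restrict_mem measurableSet_Ioc] with x hx
      rw [Real.norm_eq_abs, Real.abs_exp, ← Real.exp_zero]
      exact Real.exp_le_exp.2 (by nlinarith [hx.1])
    have hFint : IntegrableOn (fun t => Real.exp (-lam * t) * f t) (Ioc 0 T) :=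
      hfIoc.bdd_mul hexpsm hexpb
    have hGint : IntegrableOn (fun t => Real.exp (-lam * t) * g t) (Ioc 0 T) :=
      hgIoc.bdd_mul hexpsm hexpb
    have hSnn : 0 ≤ ∫ t in Ioc (0:ℝ) T, Real.exp (-lam * t) * f t :=
      setIntegral_nonneg measurableSet_Ioc fun x _ => mul_nonneg (Real.exp_pos _).le (hf0 x)
    have hGvnn : 0 ≤ ∫ t in Ioc (0:ℝ) T, Real.exp (-lam * t) * g t :=
      setIntegral_nonneg measurableSet_Ioc fun x _ => mul_nonneg (Real.exp_pos _).le (hg0 x)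
    have hSl : ∫⁻ t in Ioc 0 T, ENNReal.ofReal (Real.exp (-lam * t) * f t)
        = ENNReal.ofReal (∫ t in Ioc (0:ℝ) T, Real.exp (-lam * t) * f t) :=
      (ofReal_integral_eq_lintegral_ofReal hFint
        (ae_of_all _ fun x => mul_nonneg (Real.exp_pos _).le (hf0 x))).symm
    have hGl : ∫⁻ t in Ioc 0 T, ENNReal.ofReal (Real.exp (-lam * t) * g t)
        = ENNReal.ofReal (∫ t in Ioc (0:ℝ) T, Real.exp (-lam * t) * g t) :=
      (ofReal_integral_eq_lintegral_ofReal hGint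
        (ae_of_all _ fun x => mul_nonneg (Real.exp_pos _).le (hg0 x))).symm
    have hmA : Measurable fun t : ℝ =>
        ENNReal.ofReal (A * (Real.exp (-lam * t) * f (max (t - δ) 0))) :=
      (measurable_const.mul ((Real.measurable_exp.comp (measurable_id.const_mul (-lam))).mul
        (hfm.comp ((measurable_id.sub measurable_const).max measurable_const)))).ennreal_ofReal
    -- pointwise inequality
    have key : ∀ t ∈ Ioc (0:ℝ) T, ENNReal.ofReal (Real.exp (-lam * t) * f t) ≤
        ENNReal.ofReal (A * (Real.exp (-lam * t) * f (max (t - δ) 0))) +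
        ENNReal.ofReal (B * Real.exp (-lam * t)) *
          ∫⁻ s in Ioc (max (t - δ) 0) t,
            ENNReal.ofReal ((t - s) ^ (-(1:ℝ)/2) * (f s + g s)) := by
      intro t ht
      have h₀ : (0:ℝ) ≤ max (t - δ) 0 := le_max_right _ _
      have h₁ : max (t - δ) 0 ≤ t := max_le (by linarith) ht.1.le
      have h₂ : t ≤ max (t - δ) 0 + δ := by
        have := le_max_left (t - δ) 0
        linarith
      have hi := hineq _ t h₀ h₁ h₂
      rw [intervalIntegral.integral_of_le h₁] at hi
      have hIle : ENNReal.ofReal (∫ s in Ioc (max (t - δ) 0) t, (t - s) ^ (-(1:ℝ)/2) * (f s + g s))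
          ≤ ∫⁻ s in Ioc (max (t - δ) 0) t,
              ENNReal.ofReal ((t - s) ^ (-(1:ℝ)/2) * (f s + g s)) := by
        by_cases hint : IntegrableOn (fun s => (t - s) ^ (-(1:ℝ)/2) * (f s + g s))
            (Ioc (max (t - δ) 0) t)
        · rw [ofReal_integral_eq_lintegral_ofReal hint ?_]
          filter_upwards [ae_restrict_mem measurableSet_Ioc] with s hs
          exact mul_nonneg (Real.rpow_nonneg (by linarith [hs.2]) _)
            (add_nonneg (hf0 s) (hg0 s))
        · rw [integral_undef hint]
          simp
      calc ENNReal.ofReal (Real.exp (-lam * t) * f t)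
          ≤ ENNReal.ofReal (A * (Real.exp (-lam * t) * f (max (t - δ) 0)) +
              (B * Real.exp (-lam * t)) *
                ∫ s in Ioc (max (t - δ) 0) t, (t - s) ^ (-(1:ℝ)/2) * (f s + g s)) := by
            apply ENNReal.ofReal_le_ofReal
            have h3 := mul_le_mul_of_nonneg_left hi (Real.exp_pos (-lam * t)).le
            nlinarith [h3]
        _ ≤ ENNReal.ofReal (A * (Real.exp (-lam * t) * f (max (t - δ) 0))) +
            ENNReal.ofReal ((B * Real.exp (-lam * t)) *
                ∫ s in Ioc (max (t - δ) 0) t, (t - s) ^ (-(1:ℝ)/2) * (f s + g s)) :=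
            ENNReal.ofReal_add_le
        _ ≤ _ := by
            refine add_le_add le_rfl ?_
            rw [ENNReal.ofReal_mul (show (0:ℝ) ≤ B * Real.exp (-lam * t) by positivity)]
            exact mul_le_mul_right hIle _
    -- integrate
    have step1 : ENNReal.ofReal (∫ t in Ioc (0:ℝ) T, Real.exp (-lam * t) * f t) ≤
        (∫⁻ t in Ioc 0 T, ENNReal.ofReal (A * (Real.exp (-lam * t) * f (max (t - δ) 0))))
        + ∫⁻ t in Ioc 0 T, ENNReal.ofReal (B * Real.exp (-lam * t)) *
            ∫⁻ s in Ioc (max (t - δ) 0) t,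
              ENNReal.ofReal ((t - s) ^ (-(1:ℝ)/2) * (f s + g s)) := by
      rw [← hSl, ← lintegral_add_left hmA]
      exact lintegral_mono_ae ((ae_restrict_iff' measurableSet_Ioc).2 (ae_of_all _ key))
    have hc1nn : (0:ℝ) ≤ A * f 0 * ((1 - Real.exp (-(lam - 1/δ * Real.log A) * δ))
        / (lam - 1/δ * Real.log A)) := by
      have h1 : Real.exp (-(lam - 1/δ * Real.log A) * δ) ≤ 1 := by
        have h0 := Real.exp_le_exp.2 (show -(lam - 1/δ * Real.log A) * δ ≤ 0 by nlinarith)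
        rwa [Real.exp_zero] at h0
      have h2 : (0:ℝ) ≤ 1 - Real.exp (-(lam - 1/δ * Real.log A) * δ) := by linarith
      exact mul_nonneg (mul_nonneg hA.le (hf0 0)) (div_nonneg h2 hκpos.le)
    have hmain_e : ENNReal.ofReal (∫ t in Ioc (0:ℝ) T, Real.exp (-lam * t) * f t)
        ≤ ENNReal.ofReal (A * f 0 * ((1 - Real.exp (-(lam - 1/δ * Real.log A) * δ))
            / (lam - 1/δ * Real.log A))
          + Real.exp (-(lam - 1/δ * Real.log A) * δ)
              * (∫ t in Ioc (0:ℝ) T, Real.exp (-lam * t) * f t)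
          + 2 * δ ^ ((1:ℝ)/2) * B * ((∫ t in Ioc (0:ℝ) T, Real.exp (-lam * t) * f t)
              + ∫ t in Ioc (0:ℝ) T, Real.exp (-lam * t) * g t)) := by
      refine le_trans step1 (le_trans (add_le_add
        (term1_bound A δ T lam (lam - 1/δ * Real.log A) hA hδ hT hκpos hκlam hE f hfm hf0)
        (term2_bound B δ T lam hB hδ hT hlam0.le f g hfm hgm hf0 hg0)) (le_of_eq ?_))
      rw [hSl, hGl]
      rw [ENNReal.ofReal_add (add_nonneg hc1nn (mul_nonneg (Real.exp_pos _).le hSnn))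
          (mul_nonneg (show (0:ℝ) ≤ 2 * δ ^ ((1:ℝ)/2) * B by positivity)
            (add_nonneg hSnn hGvnn)),
        ENNReal.ofReal_add hc1nn (mul_nonneg (Real.exp_pos _).le hSnn),
        ENNReal.ofReal_mul (Real.exp_pos _).le,
        ENNReal.ofReal_mul (show (0:ℝ) ≤ 2 * δ ^ ((1:ℝ)/2) * B by positivity),
        ENNReal.ofReal_add hSnn hGvnn]
    have hreal : (∫ t in Ioc (0:ℝ) T, Real.exp (-lam * t) * f t)
        ≤ A * f 0 * ((1 - A * Real.exp (-lam * δ)) / (lam - 1/δ * Real.log A))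
          + A * Real.exp (-lam * δ) * (∫ t in Ioc (0:ℝ) T, Real.exp (-lam * t) * f t)
          + 2 * δ ^ ((1:ℝ)/2) * B * ((∫ t in Ioc (0:ℝ) T, Real.exp (-lam * t) * f t)
              + ∫ t in Ioc (0:ℝ) T, Real.exp (-lam * t) * g t) := by
      rw [hE]
      refine (ENNReal.ofReal_le_ofReal_iff ?_).1 hmain_e
      positivity
    rw [intervalIntegral.integral_of_le hT.le, intervalIntegral.integral_of_le hT.le]
    exact final_algebra hSnn hGvnn hκpos hEone hreal
end

section
/- For every σ > 0, every y ≥ 0 and every t > 0, ∫₀^{∞} x·(|∂_x S(x−y,t)| + |∂_x S(x+y,t)|) dx ≤ 2 + 2(2πσ²)^{−1/2} · y · t^{−1/2}. -/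
open MeasureTheory Real Set Filter

/-- The heat kernel `S(x,t) = (2σ²πt)^{-1/2} exp(-x²/(2σ²t))`. -/
noncomputable def heatK (σ x t : ℝ) : ℝ :=
  (Real.sqrt (2 * σ ^ 2 * π * t))⁻¹ * Real.exp (-(x ^ 2) / (2 * σ ^ 2 * t))

lemma aux_integral_x_gaussian {b : ℝ} (hb : 0 < b) :
    ∫ x in Ioi (0:ℝ), x * Real.exp (-b * x ^ 2) = (2 * b)⁻¹ := by
  have hb' : b ≠ 0 := ne_of_gt hb
  have A : ∀ x : ℝ, HasDerivAt (fun x : ℝ => -(2 * b)⁻¹ * Real.exp (-b * x ^ 2))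
      (x * Real.exp (-b * x ^ 2)) x := by
    intro x
    refine (((hasDerivAt_pow 2 x).const_mul (-b)).exp.const_mul (-(2 * b)⁻¹)).congr_deriv ?_
    field_simp
    ring
  have B : Tendsto (fun y : ℝ => -(2 * b)⁻¹ * Real.exp (-b * y ^ 2)) atTop
      (nhds (-(2 * b)⁻¹ * 0)) := by
    refine Tendsto.const_mul _ ?_
    exact Real.tendsto_exp_atBot.comp
      ((tendsto_pow_atTop two_ne_zero).const_mul_atTop_of_neg (neg_lt_zero.2 hb))
  have := integral_Ioi_of_hasDerivAt_of_tendsto' (a := 0) (fun x _ => A x)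
    (integrable_mul_exp_neg_mul_sq hb).integrableOn B
  simpa using this

lemma aux_tendsto_x_gaussian {b : ℝ} (hb : 0 < b) :
    Tendsto (fun x : ℝ => x * Real.exp (-b * x ^ 2)) atTop (nhds 0) := by
  have h := rpow_mul_exp_neg_mul_sq_isLittleO_exp_neg hb 1
  have h2 : Tendsto (fun x : ℝ => Real.exp (-(1/2) * x)) atTop (nhds 0) :=
    Real.tendsto_exp_atBot.comp (tendsto_id.const_mul_atTop_of_neg (by norm_num))
  have := h.tendsto_zero_of_tendsto h2
  simpa [Real.rpow_one] using this

lemma aux_integrable_sq_gaussian {b : ℝ} (hb : 0 < b) :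
    Integrable (fun x : ℝ => x ^ 2 * Real.exp (-b * x ^ 2)) := by
  have := integrable_rpow_mul_exp_neg_mul_sq hb (by norm_num : (-1:ℝ) < 2)
  refine this.congr (Filter.Eventually.of_forall fun x => ?_)
  show x ^ (2:ℝ) * Real.exp (-b * x ^ 2) = x ^ 2 * Real.exp (-b * x ^ 2)
  rw [Real.rpow_two]

lemma aux_integral_sq_gaussian {b : ℝ} (hb : 0 < b) :
    ∫ x in Ioi (0:ℝ), x ^ 2 * Real.exp (-b * x ^ 2)
      = (2 * b)⁻¹ * (Real.sqrt (π / b) / 2) := by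
  have hb' : b ≠ 0 := ne_of_gt hb
  have A : ∀ x : ℝ, HasDerivAt (fun x : ℝ => -(2 * b)⁻¹ * (x * Real.exp (-b * x ^ 2)))
      (x ^ 2 * Real.exp (-b * x ^ 2) - (2 * b)⁻¹ * Real.exp (-b * x ^ 2)) x := by
    intro x
    have h1 : HasDerivAt (fun x : ℝ => x * Real.exp (-b * x ^ 2))
        (1 * Real.exp (-b * x ^ 2) +
          x * (Real.exp (-b * x ^ 2) * (-b * (2 * x ^ 1)))) x :=
      (hasDerivAt_id x).mul ((hasDerivAt_pow 2 x).const_mul (-b)).exp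
    refine (h1.const_mul (-(2 * b)⁻¹)).congr_deriv ?_
    field_simp
    ring
  have B : Tendsto (fun y : ℝ => -(2 * b)⁻¹ * (y * Real.exp (-b * y ^ 2))) atTop
      (nhds (-(2 * b)⁻¹ * 0)) :=
    Tendsto.const_mul _ (aux_tendsto_x_gaussian hb)
  have hint : IntegrableOn
      (fun x : ℝ => x ^ 2 * Real.exp (-b * x ^ 2) - (2 * b)⁻¹ * Real.exp (-b * x ^ 2))
      (Ioi 0) :=
    ((aux_integrable_sq_gaussian hb).sub
      ((integrable_exp_neg_mul_sq hb).const_mul _)).integrableOn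
  have key := integral_Ioi_of_hasDerivAt_of_tendsto' (a := 0) (fun x _ => A x) hint B
  rw [integral_sub ((aux_integrable_sq_gaussian hb).integrableOn)
    (((integrable_exp_neg_mul_sq hb).const_mul _).integrableOn)] at key
  rw [integral_const_mul, integral_gaussian_Ioi] at key
  simp only [mul_zero, zero_mul, Real.exp_zero, mul_one] at key
  linarith [key]

/-- For every `σ > 0`, `y ≥ 0` and `t > 0`,
`∫₀^∞ x (|∂ₓS(x-y,t)| + |∂ₓS(x+y,t)|) dx ≤ 2 + 2(2πσ²)^{-1/2} y t^{-1/2}`. -/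
theorem stmt_7 (σ y t : ℝ) (hσ : 0 < σ) (hy : 0 ≤ y) (ht : 0 < t) :
    (∫ x in Ioi (0:ℝ),
        x * (|deriv (fun z => heatK σ z t) (x - y)| +
             |deriv (fun z => heatK σ z t) (x + y)|)) ≤
      2 + 2 * (Real.sqrt (2 * π * σ ^ 2))⁻¹ * y * t ^ (-(1:ℝ)/2) := by
  have hπ := Real.pi_pos
  set A : ℝ := 2 * σ ^ 2 * t with hA_def
  have hA : 0 < A := by positivity
  set b : ℝ := A⁻¹ with hb_def
  have hb : 0 < b := inv_pos.mpr hA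
  set c : ℝ := Real.sqrt (2 * σ ^ 2 * π * t) with hc_def
  have hc : 0 < c := Real.sqrt_pos.mpr (by positivity)
  set k : ℝ := 2 / (c * A) with hk_def
  have hk : 0 < k := by positivity
  have hexp : ∀ u : ℝ, Real.exp (-(u ^ 2) / A) = Real.exp (-b * u ^ 2) := by
    intro u; congr 1; rw [hb_def]; field_simp
  -- derivative of the heat kernel
  have hD : ∀ z : ℝ, deriv (fun z => heatK σ z t) z
      = c⁻¹ * (Real.exp (-(z ^ 2) / A) * (-(2 * z ^ 1) / A)) := by
    intro z
    have h1 : HasDerivAt (fun z : ℝ => -(z ^ 2) / A) (-(2 * z ^ 1) / A) z :=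
      ((hasDerivAt_pow 2 z).neg).div_const A
    have h2 : HasDerivAt (fun z : ℝ => heatK σ z t)
        (c⁻¹ * (Real.exp (-(z ^ 2) / A) * (-(2 * z ^ 1) / A))) z := by
      have := (h1.exp).const_mul c⁻¹
      simpa [heatK, hc_def, hA_def] using this
    exact h2.deriv
  -- absolute value of the derivative
  set φ : ℝ → ℝ := fun u => k * (|u| * Real.exp (-b * u ^ 2)) with hφ_def
  have hφnn : ∀ u, 0 ≤ φ u := fun u => by positivity
  have habs : ∀ z : ℝ, |deriv (fun z => heatK σ z t) z| = φ z := by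
    intro z
    rw [hD z, hexp z, hφ_def]
    rw [abs_mul, abs_mul, abs_of_nonneg (inv_nonneg.mpr hc.le),
      abs_of_nonneg (Real.exp_pos _).le, abs_div, abs_neg, abs_of_nonneg hA.le,
      abs_mul, abs_two, abs_pow, pow_one]
    rw [hk_def]
    field_simp
  -- basic integrability facts
  have ig0 : Integrable (fun x : ℝ => Real.exp (-b * x ^ 2)) := integrable_exp_neg_mul_sq hb
  have ig1 : Integrable (fun x : ℝ => x * Real.exp (-b * x ^ 2)) :=
    integrable_mul_exp_neg_mul_sq hb
  have ig1' : Integrable (fun x : ℝ => |x| * Real.exp (-b * x ^ 2)) := by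
    refine ig1.abs.congr (Filter.Eventually.of_forall fun x => ?_)
    show |x * Real.exp (-b * x ^ 2)| = |x| * Real.exp (-b * x ^ 2)
    rw [abs_mul, abs_of_nonneg (Real.exp_pos _).le]
  have ig2 : Integrable (fun x : ℝ => x ^ 2 * Real.exp (-b * x ^ 2)) :=
    aux_integrable_sq_gaussian hb
  have φint : Integrable φ := ig1'.const_mul k
  have xφint : Integrable (fun u : ℝ => |u| * φ u) := by
    refine (ig2.const_mul k).congr (Filter.Eventually.of_forall fun u => ?_)
    rw [hφ_def]
    simp only []
    rw [show |u| * (k * (|u| * Real.exp (-b * u ^ 2)))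
        = k * ((|u| * |u|) * Real.exp (-b * u ^ 2)) by ring, abs_mul_abs_self,
      ← sq u]
  have yφint : Integrable (fun u : ℝ => (|u| + y) * φ u) := by
    refine (xφint.add (φint.const_mul y)).congr (Filter.Eventually.of_forall fun u => ?_)
    simp only [Pi.add_apply]
    ring
  -- the two values of the full-line integrals
  have Jφ : ∫ u : ℝ, φ u = 2 / c := by
    rw [hφ_def, integral_const_mul]
    have : ∫ u : ℝ, |u| * Real.exp (-b * u ^ 2)
        = 2 * ∫ x in Ioi (0:ℝ), x * Real.exp (-b * x ^ 2) := by
      rw [← integral_comp_abs (f := fun x => x * Real.exp (-b * x ^ 2))]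
      refine integral_congr_ae (Filter.Eventually.of_forall fun u => ?_)
      simp [sq_abs]
    rw [this, aux_integral_x_gaussian hb]
    rw [hk_def, hb_def]
    field_simp
  have Jxφ : ∫ u : ℝ, |u| * φ u = 1 := by
    have h1 : ∫ u : ℝ, |u| * φ u = k * ∫ u : ℝ, u ^ 2 * Real.exp (-b * u ^ 2) := by
      rw [← integral_const_mul]
      refine integral_congr_ae (Filter.Eventually.of_forall fun u => ?_)
      rw [hφ_def]
      simp only []
      rw [show |u| * (k * (|u| * Real.exp (-b * u ^ 2)))
          = k * ((|u| * |u|) * Real.exp (-b * u ^ 2)) by ring, abs_mul_abs_self, ← sq u]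
    have h2 : ∫ u : ℝ, u ^ 2 * Real.exp (-b * u ^ 2)
        = 2 * ∫ x in Ioi (0:ℝ), x ^ 2 * Real.exp (-b * x ^ 2) := by
      rw [← integral_comp_abs (f := fun x => x ^ 2 * Real.exp (-b * x ^ 2))]
      refine integral_congr_ae (Filter.Eventually.of_forall fun u => ?_)
      simp [sq_abs]
    rw [h1, h2, aux_integral_sq_gaussian hb]
    have hπb : π / b = π * A := by rw [hb_def]; field_simp
    have hcA : Real.sqrt (π * A) = c := by
      rw [hc_def, hA_def]; congr 1; ring
    rw [hπb, hcA, hb_def]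
    rw [show (2 * A⁻¹)⁻¹ = A / 2 by field_simp]
    rw [hk_def]
    field_simp
  -- rewrite the integrand
  have hL : (∫ x in Ioi (0:ℝ),
        x * (|deriv (fun z => heatK σ z t) (x - y)| +
             |deriv (fun z => heatK σ z t) (x + y)|))
      = ∫ x in Ioi (0:ℝ), x * (φ (x - y) + φ (x + y)) := by
    refine integral_congr_ae (Filter.Eventually.of_forall fun x => ?_)
    simp only [habs]
  rw [hL]
  -- integrable majorants
  have hG1 : Integrable (fun x : ℝ => (|x - y| + y) * φ (x - y)) :=
    yφint.comp_sub_right y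
  have hG2 : Integrable (fun x : ℝ => |x + y| * φ (x + y)) :=
    xφint.comp_add_right y
  -- pointwise bound on Ioi 0
  have step1 : (∫ x in Ioi (0:ℝ), x * (φ (x - y) + φ (x + y)))
      ≤ ∫ x in Ioi (0:ℝ), ((|x - y| + y) * φ (x - y) + |x + y| * φ (x + y)) := by
    refine integral_mono_of_nonneg ?_ ((hG1.add hG2).integrableOn) ?_
    · refine (ae_restrict_iff' measurableSet_Ioi).mpr
        (Filter.Eventually.of_forall fun x hx => ?_)
      have hx0 : 0 < x := hx
      have := hφnn (x - y); have := hφnn (x + y)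
      positivity
    · refine (ae_restrict_iff' measurableSet_Ioi).mpr
        (Filter.Eventually.of_forall fun x hx => ?_)
      have hx0 : 0 < x := hx
      have h1 : x ≤ |x - y| + y := by
        have := le_abs_self (x - y); linarith
      have h2 : x ≤ |x + y| := by
        have := le_abs_self (x + y); linarith
      have := hφnn (x - y); have := hφnn (x + y)
      calc x * (φ (x - y) + φ (x + y))
          = x * φ (x - y) + x * φ (x + y) := by ring
        _ ≤ (|x - y| + y) * φ (x - y) + |x + y| * φ (x + y) := by
            gcongr
  have step2 : (∫ x in Ioi (0:ℝ), ((|x - y| + y) * φ (x - y) + |x + y| * φ (x + y)))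
      = (∫ x in Ioi (0:ℝ), (|x - y| + y) * φ (x - y))
        + ∫ x in Ioi (0:ℝ), |x + y| * φ (x + y) :=
    integral_add hG1.integrableOn hG2.integrableOn
  have step3a : (∫ x in Ioi (0:ℝ), (|x - y| + y) * φ (x - y))
      ≤ ∫ x : ℝ, (|x - y| + y) * φ (x - y) := by
    refine setIntegral_le_integral hG1 (Filter.Eventually.of_forall fun x => ?_)
    have := hφnn (x - y)
    have : 0 ≤ |x - y| + y := by positivity
    positivity
  have step3b : (∫ x in Ioi (0:ℝ), |x + y| * φ (x + y))
      ≤ ∫ x : ℝ, |x + y| * φ (x + y) := by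
    refine setIntegral_le_integral hG2 (Filter.Eventually.of_forall fun x => ?_)
    have := hφnn (x + y)
    positivity
  have step4a : (∫ x : ℝ, (|x - y| + y) * φ (x - y))
      = ∫ u : ℝ, (|u| + y) * φ u :=
    integral_sub_right_eq_self (fun u => (|u| + y) * φ u) y
  have step4b : (∫ x : ℝ, |x + y| * φ (x + y)) = ∫ u : ℝ, |u| * φ u :=
    integral_add_right_eq_self (fun u => |u| * φ u) y
  have step5 : (∫ u : ℝ, (|u| + y) * φ u)
      = (∫ u : ℝ, |u| * φ u) + y * ∫ u : ℝ, φ u := by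
    rw [← integral_const_mul, ← integral_add xφint (φint.const_mul y)]
    refine integral_congr_ae (Filter.Eventually.of_forall fun u => ?_)
    simp only [Pi.add_apply]
    ring
  -- RHS identification
  have hRHS : 2 * (Real.sqrt (2 * π * σ ^ 2))⁻¹ * y * t ^ (-(1:ℝ)/2) = 2 * y / c := by
    have h1 : (t : ℝ) ^ (-(1:ℝ)/2) = (Real.sqrt t)⁻¹ := by
      rw [show (-(1:ℝ)/2) = -(1/2 : ℝ) by norm_num, Real.rpow_neg ht.le,
        ← Real.sqrt_eq_rpow]
    have h2 : c = Real.sqrt (2 * π * σ ^ 2) * Real.sqrt t := by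
      rw [hc_def, ← Real.sqrt_mul (by positivity) t]
      congr 1; ring
    have hs1 : (0:ℝ) < Real.sqrt (2 * π * σ ^ 2) := Real.sqrt_pos.mpr (by positivity)
    have hs2 : (0:ℝ) < Real.sqrt t := Real.sqrt_pos.mpr ht
    rw [h1, h2]
    field_simp
  calc (∫ x in Ioi (0:ℝ), x * (φ (x - y) + φ (x + y)))
      ≤ (∫ x in Ioi (0:ℝ), (|x - y| + y) * φ (x - y))
        + ∫ x in Ioi (0:ℝ), |x + y| * φ (x + y) := by rw [← step2]; exact step1
    _ ≤ (∫ u : ℝ, (|u| + y) * φ u) + ∫ u : ℝ, |u| * φ u := by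
        rw [← step4a, ← step4b]; exact add_le_add step3a step3b
    _ = (1 + y * (2 / c)) + 1 := by rw [step5, Jxφ, Jφ]
    _ = 2 + 2 * y / c := by ring
    _ = 2 + 2 * (Real.sqrt (2 * π * σ ^ 2))⁻¹ * y * t ^ (-(1:ℝ)/2) := by rw [hRHS]
end

section
/- Let σ > 0, T > 0, let b be a bounded measurable function on [0,∞)×[0,T], and let ν be measurable with ‖ν‖_{L_t^∞(L_x^1)} := sup_{t∈[0,T]} ∫₀^∞ |ν(x,t)| dx < ∞. Suppose μ is continuous on [0,∞)×[0,T], satisfies sup_{t∈[0,T]} ∫₀^∞ |μ(x,t)| dx < ∞, and satisfies the mild (Duhamel) formulation of the Fokker–Planck problem μ_t − (σ²/2)μ_xx − (bμ)_x = ν_x with μ(x,0) = 0 and μ(0,t) = 0, namely μ(x,t) = ∫₀^t ∫₀^∞ (∂_x S(x−y,t−s) + ∂_x S(x+y,t−s))·(b(y,s)μ(y,s) + ν(y,s)) dy ds. Then there exists a constant C > 0, depending only on σ, ‖b‖_∞ and T, such that sup_{t∈[0,T]} ∫₀^∞ |μ(x,t)| dx ≤ C·‖ν‖_{L_t^∞(L_x^1)}.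 -/
open MeasureTheory Real Set

/-- `∂ₓ S(x,t)` -/
noncomputable def heatKx (σ x t : ℝ) : ℝ := deriv (fun y => heatK σ y t) x

/-- `‖f‖_{L_t^∞(L_x^1)} = sup_{t∈[0,T]} ∫₀^∞ |f(x,t)| dx`. -/
noncomputable def supL1 (T : ℝ) (f : ℝ → ℝ → ℝ) : ℝ :=
  sSup ((fun t => ∫ x in Ioi (0:ℝ), |f x t|) '' Icc 0 T)

open Filter

section aux



lemma heatK_nonpos (σ x t : ℝ) (ht : t ≤ 0) : heatK σ x t = 0 := by
  have h : 2 * σ ^ 2 * π * t ≤ 0 := by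
    have : (0:ℝ) ≤ 2 * σ ^ 2 * π := by positivity
    exact mul_nonpos_of_nonneg_of_nonpos this ht
  simp [heatK, Real.sqrt_eq_zero_of_nonpos h]

lemma heatKx_nonpos (σ x t : ℝ) (ht : t ≤ 0) : heatKx σ x t = 0 := by
  have : (fun y => heatK σ y t) = fun _ => (0:ℝ) := funext fun y => heatK_nonpos σ y t ht
  simp [heatKx, this]

lemma heatKx_pos (σ x t : ℝ) (hσ : 0 < σ) (ht : 0 < t) :
    heatKx σ x t = -(x / (σ ^ 2 * t)) * heatK σ x t := by
  have hd : (2 * σ ^ 2 * t) ≠ 0 := by positivity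
  have h1 : HasDerivAt (fun y : ℝ => -(y ^ 2) / (2 * σ ^ 2 * t))
      (-(2 * x ^ 1) / (2 * σ ^ 2 * t)) x := (hasDerivAt_pow 2 x).neg.div_const _
  have h2 : HasDerivAt (fun y : ℝ => Real.exp (-(y ^ 2) / (2 * σ ^ 2 * t)))
      (Real.exp (-(x ^ 2) / (2 * σ ^ 2 * t)) * (-(2 * x ^ 1) / (2 * σ ^ 2 * t))) x := h1.exp
  have h3 : HasDerivAt (fun y : ℝ => heatK σ y t)
      ((Real.sqrt (2 * σ ^ 2 * π * t))⁻¹ *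
        (Real.exp (-(x ^ 2) / (2 * σ ^ 2 * t)) * (-(2 * x ^ 1) / (2 * σ ^ 2 * t)))) x :=
    h2.const_mul _
  rw [heatKx, h3.deriv, heatK]
  have hσ' : σ ≠ 0 := ne_of_gt hσ
  have ht' : t ≠ 0 := ne_of_gt ht
  field_simp

lemma heatKx_eq_ite (σ : ℝ) (hσ : 0 < σ) : (fun p : ℝ × ℝ => heatKx σ p.1 p.2) =
    fun p : ℝ × ℝ => if 0 < p.2 then
      -(p.1 / (σ ^ 2 * p.2)) * ((Real.sqrt (2 * σ ^ 2 * π * p.2))⁻¹ *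
        Real.exp (-(p.1 ^ 2) / (2 * σ ^ 2 * p.2))) else 0 := by
  funext p
  by_cases h : 0 < p.2
  · rw [if_pos h, heatKx_pos σ p.1 p.2 hσ h, heatK]
  · rw [if_neg h, heatKx_nonpos σ p.1 p.2 (not_lt.1 h)]

lemma measurable_heatKx (σ : ℝ) (hσ : 0 < σ) :
    Measurable (fun p : ℝ × ℝ => heatKx σ p.1 p.2) := by
  rw [heatKx_eq_ite σ hσ]
  refine Measurable.ite (measurableSet_lt measurable_const measurable_snd) ?_ measurable_const
  apply Measurable.mul
  · exact (measurable_fst.div (measurable_snd.const_mul _)).neg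
  · exact ((continuous_sqrt.measurable.comp (measurable_snd.const_mul _)).inv).mul
      (Real.measurable_exp.comp ((measurable_fst.pow_const 2).neg.div
        (measurable_snd.const_mul _)))

attribute [irreducible] heatK heatKx

lemma gauss_moment (bb : ℝ) (hb : 0 < bb) :
    ∫ x in Ioi (0:ℝ), x * Real.exp (-bb * x ^ 2) = 1 / (2 * bb) := by
  have hderiv : ∀ x ∈ Ici (0:ℝ), HasDerivAt (fun y : ℝ => -(1 / (2 * bb)) * Real.exp (-bb * y ^ 2))
      (x * Real.exp (-bb * x ^ 2)) x := by
    intro x _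
    have h1 : HasDerivAt (fun y : ℝ => -bb * y ^ 2) (-bb * (2 * x ^ 1)) x :=
      (hasDerivAt_pow 2 x).const_mul _
    have h2 := (h1.exp).const_mul (-(1 / (2 * bb)))
    refine h2.congr_deriv ?_
    field_simp [hb.ne']
  have hint : IntegrableOn (fun x : ℝ => x * Real.exp (-bb * x ^ 2)) (Ioi 0) :=
    (integrable_mul_exp_neg_mul_sq hb).integrableOn
  have htend : Tendsto (fun y : ℝ => -(1 / (2 * bb)) * Real.exp (-bb * y ^ 2)) atTop (nhds 0) := by
    have h1 : Tendsto (fun y : ℝ => -bb * y ^ 2) atTop atBot := by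
      apply Tendsto.const_mul_atTop_of_neg (neg_neg_iff_pos.2 hb)
      exact tendsto_pow_atTop two_ne_zero
    have := (Real.tendsto_exp_atBot.comp h1).const_mul (-(1 / (2 * bb)))
    simpa using this
  rw [integral_Ioi_of_hasDerivAt_of_tendsto' hderiv hint htend]
  simp

lemma abs_heatKx_neg (σ x τ : ℝ) (hσ : 0 < σ) : |heatKx σ (-x) τ| = |heatKx σ x τ| := by
  rcases le_or_gt τ 0 with h | h
  · rw [heatKx_nonpos σ _ _ h, heatKx_nonpos σ _ _ h]
  · rw [heatKx_pos σ _ _ hσ h, heatKx_pos σ _ _ hσ h]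
    have hK : heatK σ (-x) τ = heatK σ x τ := by rw [heatK, heatK]; ring_nf
    rw [hK, abs_mul, abs_mul]
    congr 1
    rw [abs_neg, abs_neg, abs_div, abs_div, abs_neg]

set_option maxHeartbeats 1000000 in
lemma measurable_heatKx_fixed (σ τ : ℝ) (hσ : 0 < σ) :
    Measurable fun x : ℝ => heatKx σ x τ := by
  have h := (measurable_heatKx σ hσ).comp
    (measurable_id.prodMk measurable_const : Measurable fun x : ℝ => (x, τ))
  exact h

lemma kerInt_Ioi (σ τ : ℝ) (hσ : 0 < σ) (h : 0 < τ) :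
    ∫⁻ x in Ioi (0:ℝ), ENNReal.ofReal |heatKx σ x τ| =
      ENNReal.ofReal ((Real.sqrt (2 * σ ^ 2 * π * τ))⁻¹) := by
  set c1 : ℝ := (σ ^ 2 * τ)⁻¹ with hc1
  set c2 : ℝ := (Real.sqrt (2 * σ ^ 2 * π * τ))⁻¹ with hc2
  set bb : ℝ := (2 * σ ^ 2 * τ)⁻¹ with hbb
  have hbb0 : 0 < bb := by positivity
  have hc10 : 0 < c1 := by positivity
  have hc20 : 0 < c2 := by
    have : 0 < 2 * σ ^ 2 * π * τ := by positivity
    positivity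
  have habs : ∀ x ∈ Ioi (0:ℝ), |heatKx σ x τ| = (c1 * c2) * (x * Real.exp (-bb * x ^ 2)) := by
    intro x hx
    rw [heatKx_pos σ x τ hσ h, heatK]
    have h1 : -(x ^ 2) / (2 * σ ^ 2 * τ) = -bb * x ^ 2 := by
      rw [hbb]; field_simp
    rw [h1, abs_mul, abs_neg, abs_div, abs_of_nonneg (le_of_lt hx),
      abs_of_nonneg (by positivity : (0:ℝ) ≤ σ ^ 2 * τ),
      abs_of_nonneg (by positivity : (0:ℝ) ≤ c2 * Real.exp (-bb * x ^ 2))]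
    rw [hc1]; field_simp
  have hint : IntegrableOn (fun x : ℝ => (c1 * c2) * (x * Real.exp (-bb * x ^ 2))) (Ioi 0) :=
    ((integrable_mul_exp_neg_mul_sq hbb0).const_mul _).integrableOn
  calc ∫⁻ x in Ioi (0:ℝ), ENNReal.ofReal |heatKx σ x τ|
      = ∫⁻ x in Ioi (0:ℝ), ENNReal.ofReal ((c1 * c2) * (x * Real.exp (-bb * x ^ 2))) := by
        refine setLIntegral_congr_fun measurableSet_Ioi ?_
        intro x hx; dsimp only; rw [habs x hx]
    _ = ENNReal.ofReal (∫ x in Ioi (0:ℝ), (c1 * c2) * (x * Real.exp (-bb * x ^ 2))) := by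
        rw [ofReal_integral_eq_lintegral_ofReal hint]
        refine (ae_restrict_iff' measurableSet_Ioi).2 (Filter.Eventually.of_forall ?_)
        intro x hx
        have : (0:ℝ) < x := hx
        positivity
    _ = ENNReal.ofReal c2 := by
        rw [integral_const_mul, gauss_moment bb hbb0]
        congr 1
        rw [hc1, hbb]; field_simp
lemma kerInt (σ τ e : ℝ) (hσ : 0 < σ) :
    ∫⁻ x in Ioi (0:ℝ), ENNReal.ofReal |heatKx σ (x + e) τ| ≤
      ENNReal.ofReal (1 / (σ * Real.sqrt τ)) := by
  rcases le_or_gt τ 0 with h | h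
  · simp [heatKx_nonpos σ _ _ h]
  have hmeas : Measurable fun x : ℝ => ENNReal.ofReal |heatKx σ x τ| :=
    ENNReal.measurable_ofReal.comp (measurable_heatKx_fixed σ τ hσ).abs
  have step1 : ∫⁻ x in Ioi (0:ℝ), ENNReal.ofReal |heatKx σ (x + e) τ| ≤
      ∫⁻ x : ℝ, ENNReal.ofReal |heatKx σ (x + e) τ| := setLIntegral_le_lintegral _ _
  have step2 : ∫⁻ x : ℝ, ENNReal.ofReal |heatKx σ (x + e) τ| =
      ∫⁻ x : ℝ, ENNReal.ofReal |heatKx σ x τ| :=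
    lintegral_add_right_eq_self (fun x => ENNReal.ofReal |heatKx σ x τ|) e
  -- split and reflect
  have hneg : MeasurePreserving (fun x : ℝ => -x) volume volume :=
    ⟨measurable_neg, Measure.map_neg_eq_self _⟩
  have hemb : MeasurableEmbedding (fun x : ℝ => -x) :=
    (MeasurableEquiv.neg ℝ).measurableEmbedding
  have refl : ∫⁻ x in Iic (0:ℝ), ENNReal.ofReal |heatKx σ x τ| =
      ∫⁻ x in Ioi (0:ℝ), ENNReal.ofReal |heatKx σ x τ| := by
    have him : (fun x : ℝ => -x) '' Ioi 0 = Iio 0 := by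
      rw [Set.image_neg_eq_neg, Set.neg_Ioi, neg_zero]
    have := hneg.setLIntegral_comp_emb hemb
      (fun x => ENNReal.ofReal |heatKx σ x τ|) (Ioi 0)
    rw [him] at this
    rw [← setLIntegral_congr (Iio_ae_eq_Iic (a := (0:ℝ))), ← this]
    refine setLIntegral_congr_fun measurableSet_Ioi ?_
    intro x _
    dsimp only
    rw [abs_heatKx_neg σ x τ hσ]
  have split : ∫⁻ x : ℝ, ENNReal.ofReal |heatKx σ x τ| =
      2 * ∫⁻ x in Ioi (0:ℝ), ENNReal.ofReal |heatKx σ x τ| := by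
    rw [← lintegral_add_compl (fun x => ENNReal.ofReal |heatKx σ x τ|)
      (measurableSet_Iic (a := (0:ℝ))), compl_Iic, refl, two_mul]
  calc ∫⁻ x in Ioi (0:ℝ), ENNReal.ofReal |heatKx σ (x + e) τ|
      ≤ ∫⁻ x : ℝ, ENNReal.ofReal |heatKx σ (x + e) τ| := step1
    _ = ∫⁻ x : ℝ, ENNReal.ofReal |heatKx σ x τ| := step2
    _ = 2 * ∫⁻ x in Ioi (0:ℝ), ENNReal.ofReal |heatKx σ x τ| := split
    _ = 2 * ENNReal.ofReal ((Real.sqrt (2 * σ ^ 2 * π * τ))⁻¹) := by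
        rw [kerInt_Ioi σ τ hσ h]
    _ = ENNReal.ofReal (2 * (Real.sqrt (2 * σ ^ 2 * π * τ))⁻¹) := by
        rw [show (2:ENNReal) = ENNReal.ofReal 2 by simp,
          ← ENNReal.ofReal_mul (by norm_num : (0:ℝ) ≤ 2)]
    _ ≤ ENNReal.ofReal (1 / (σ * Real.sqrt τ)) := by
        apply ENNReal.ofReal_le_ofReal
        have hs : Real.sqrt (2 * σ ^ 2 * π * τ) = Real.sqrt (2 * π) * (σ * Real.sqrt τ) := by
          have h9 : 2 * σ ^ 2 * π * τ = (2 * π) * (σ ^ 2 * τ) := by ring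
          rw [h9, Real.sqrt_mul (by positivity), Real.sqrt_mul (sq_nonneg σ),
            Real.sqrt_sq hσ.le]
        rw [hs]
        have hm : 0 < σ * Real.sqrt τ := by positivity
        have h2pi : (2:ℝ) ≤ Real.sqrt (2 * π) := by
          have h4 : (4:ℝ) ≤ 2 * π := by nlinarith [Real.pi_gt_three]
          have h5 := Real.sqrt_le_sqrt h4
          rwa [show (4:ℝ) = 2 ^ 2 by norm_num, Real.sqrt_sq (by norm_num)] at h5
        rw [mul_inv, ← mul_assoc, one_div]
        have hkey : 2 * (Real.sqrt (2 * π))⁻¹ ≤ 1 := by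
          rw [← le_div_iff₀ (by positivity : (0:ℝ) < (Real.sqrt (2*π))⁻¹)]
          simpa using h2pi
        calc 2 * (Real.sqrt (2 * π))⁻¹ * (σ * Real.sqrt τ)⁻¹ ≤ 1 * (σ * Real.sqrt τ)⁻¹ :=
              mul_le_mul_of_nonneg_right hkey (by positivity)
          _ = (σ * Real.sqrt τ)⁻¹ := one_mul _

lemma expMoment (lam : ℝ) (hl : 0 < lam) :
    ∫⁻ u in Ioi (0:ℝ), ENNReal.ofReal (Real.exp (-(lam * u)) / Real.sqrt u) ≤
      ENNReal.ofReal (3 / Real.sqrt lam) := by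
  have hval := Real.integral_rpow_mul_exp_neg_mul_Ioi (by norm_num : (0:ℝ) < 1/2) hl
  have hpos : (0:ℝ) < (1 / lam) ^ ((1:ℝ)/2) * Real.Gamma (1/2) := by positivity
  have hint : IntegrableOn (fun u : ℝ => u ^ ((1:ℝ)/2 - 1) * Real.exp (-(lam * u))) (Ioi 0) := by
    by_contra hc
    rw [MeasureTheory.integral_undef hc] at hval
    exact absurd hval.symm (ne_of_gt hpos)
  have hcongr : ∀ u ∈ Ioi (0:ℝ),
      Real.exp (-(lam * u)) / Real.sqrt u = u ^ ((1:ℝ)/2 - 1) * Real.exp (-(lam * u)) := by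
    intro u hu
    have hu0 : (0:ℝ) < u := hu
    rw [Real.sqrt_eq_rpow, div_eq_mul_inv, ← Real.rpow_neg hu0.le, mul_comm]
    norm_num
  calc ∫⁻ u in Ioi (0:ℝ), ENNReal.ofReal (Real.exp (-(lam * u)) / Real.sqrt u)
      = ∫⁻ u in Ioi (0:ℝ), ENNReal.ofReal (u ^ ((1:ℝ)/2 - 1) * Real.exp (-(lam * u))) := by
        refine setLIntegral_congr_fun measurableSet_Ioi ?_
        intro u hu; dsimp only; rw [hcongr u hu]
    _ = ENNReal.ofReal (∫ u in Ioi (0:ℝ), u ^ ((1:ℝ)/2 - 1) * Real.exp (-(lam * u))) := by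
        rw [ofReal_integral_eq_lintegral_ofReal hint]
        refine (ae_restrict_iff' measurableSet_Ioi).2 (Filter.Eventually.of_forall ?_)
        intro u hu
        have : (0:ℝ) < u := hu
        positivity
    _ = ENNReal.ofReal ((1 / lam) ^ ((1:ℝ)/2) * Real.Gamma (1/2)) := by rw [hval]
    _ ≤ ENNReal.ofReal (3 / Real.sqrt lam) := by
        apply ENNReal.ofReal_le_ofReal
        rw [Real.Gamma_one_half_eq, ← Real.sqrt_eq_rpow, one_div lam, Real.sqrt_inv]
        have hs3 : Real.sqrt π ≤ 3 := by
          have h9 : π ≤ 9 := by nlinarith [Real.pi_le_four]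
          have := Real.sqrt_le_sqrt h9
          rwa [show (9:ℝ) = 3 ^ 2 by norm_num, Real.sqrt_sq (by norm_num)] at this
        rw [div_eq_mul_inv, mul_comm ((Real.sqrt lam)⁻¹)]
        exact mul_le_mul_of_nonneg_right hs3 (by positivity)

lemma timeInt (lam t : ℝ) (hl : 1 ≤ lam) (ht : 0 ≤ t) :
    ∫⁻ s in Ioc (0:ℝ) t, ENNReal.ofReal (Real.exp (lam * s) / Real.sqrt (t - s)) ≤
      ENNReal.ofReal (Real.exp (lam * t) * (3 / Real.sqrt lam)) := by
  have hl0 : (0:ℝ) < lam := lt_of_lt_of_le one_pos hl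
  have hpt : ∀ s ∈ Ioc (0:ℝ) t,
      Real.exp (lam * s) / Real.sqrt (t - s)
        = Real.exp (lam * t) * (Real.exp (-(lam * (t - s))) / Real.sqrt (t - s)) := by
    intro s _
    rw [← mul_div_assoc, ← Real.exp_add]
    ring_nf
  have hmp : MeasurePreserving (fun s : ℝ => t - s) volume volume := by
    have h1 : MeasurePreserving (fun s : ℝ => -s) volume volume :=
      ⟨measurable_neg, Measure.map_neg_eq_self _⟩
    have h2 : MeasurePreserving (fun s : ℝ => t + s) volume volume :=
      ⟨measurable_const_add t, map_add_left_eq_self volume t⟩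
    have := h2.comp h1
    simpa [Function.comp_def, sub_eq_add_neg] using this
  have hemb : MeasurableEmbedding (fun s : ℝ => t - s) := by
    have : (fun s : ℝ => t - s) = (fun s : ℝ => t + s) ∘ (fun s : ℝ => -s) := by
      funext s; simp [sub_eq_add_neg]
    rw [this]
    exact ((MeasurableEquiv.addLeft t).measurableEmbedding).comp
      (MeasurableEquiv.neg ℝ).measurableEmbedding
  calc ∫⁻ s in Ioc (0:ℝ) t, ENNReal.ofReal (Real.exp (lam * s) / Real.sqrt (t - s))
      = ∫⁻ s in Ioc (0:ℝ) t, ENNReal.ofReal (Real.exp (lam * t)) *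
          ENNReal.ofReal (Real.exp (-(lam * (t - s))) / Real.sqrt (t - s)) := by
        refine setLIntegral_congr_fun measurableSet_Ioc ?_
        intro s hs
        dsimp only
        rw [hpt s hs, ENNReal.ofReal_mul (Real.exp_nonneg _)]
    _ = ENNReal.ofReal (Real.exp (lam * t)) *
          ∫⁻ s in Ioc (0:ℝ) t, ENNReal.ofReal (Real.exp (-(lam * (t - s))) / Real.sqrt (t - s)) :=
        lintegral_const_mul' _ _ ENNReal.ofReal_ne_top
    _ ≤ ENNReal.ofReal (Real.exp (lam * t)) * ENNReal.ofReal (3 / Real.sqrt lam) := by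
        apply mul_le_mul_right
        have hsub := hmp.setLIntegral_comp_emb hemb
          (fun u => ENNReal.ofReal (Real.exp (-(lam * u)) / Real.sqrt u)) (Ioc 0 t)
        rw [Set.image_const_sub_Ioc, sub_zero, sub_self] at hsub
        rw [hsub]
        refine le_trans (lintegral_mono_set (Ico_subset_Ici_self)) ?_
        rw [← setLIntegral_congr (Ioi_ae_eq_Ici (a := (0:ℝ)))]
        exact expMoment lam hl0
    _ = ENNReal.ofReal (Real.exp (lam * t) * (3 / Real.sqrt lam)) :=
        (ENNReal.ofReal_mul (Real.exp_nonneg _)).symm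

end aux

/-- `L^∞`-in-time `L^1`-in-space estimate for a mild solution of a
Fokker–Planck equation with a source in divergence form on the half line:
`sup_{t∈[0,T]} ∫₀^∞ |μ(x,t)| dx ≤ C ‖ν‖_{L_t^∞(L_x^1)}`, with `C` depending only on
`σ`, `‖b‖_∞` and `T`. -/



theorem stmt_8 (σ T Mb : ℝ) (hσ : 0 < σ) (hT : 0 < T) (hMb : 0 ≤ Mb) :
    ∃ C : ℝ, 0 < C ∧ ∀ b ν μ : ℝ → ℝ → ℝ,
      Measurable (fun p : ℝ × ℝ => b p.1 p.2) →
      (∀ x t, |b x t| ≤ Mb) →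
      Measurable (fun p : ℝ × ℝ => ν p.1 p.2) →
      (∀ t ∈ Icc (0:ℝ) T, IntegrableOn (fun x => ν x t) (Ioi 0)) →
      BddAbove ((fun t => ∫ x in Ioi (0:ℝ), |ν x t|) '' Icc 0 T) →
      Continuous (fun p : ℝ × ℝ => μ p.1 p.2) →
      (∀ t ∈ Icc (0:ℝ) T, IntegrableOn (fun x => μ x t) (Ioi 0)) →
      BddAbove ((fun t => ∫ x in Ioi (0:ℝ), |μ x t|) '' Icc 0 T) →
      (∀ x ∈ Ici (0:ℝ), ∀ t ∈ Icc (0:ℝ) T,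
        μ x t = ∫ s in (0:ℝ)..t, ∫ y in Ioi (0:ℝ),
          (heatKx σ (x - y) (t - s) + heatKx σ (x + y) (t - s)) *
            (b y s * μ y s + ν y s)) →
      ∀ t ∈ Icc (0:ℝ) T, (∫ x in Ioi (0:ℝ), |μ x t|) ≤ C * supL1 T ν := by
  classical
  set lam : ℝ := 1 + (12 * Mb / σ) ^ 2 with hlam_def
  have hlam1 : (1:ℝ) ≤ lam := by
    rw [hlam_def]
    nlinarith [sq_nonneg (12 * Mb / σ)]
  have hlam0 : (0:ℝ) < lam := lt_of_lt_of_le one_pos hlam1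
  have hsqlam1 : (1:ℝ) ≤ Real.sqrt lam := by
    have := Real.sqrt_le_sqrt hlam1
    simpa using this
  have hsqlam : 12 * Mb / σ ≤ Real.sqrt lam := by
    have h1 : (12 * Mb / σ) ^ 2 ≤ lam := by rw [hlam_def]; linarith
    have h2 := Real.sqrt_le_sqrt h1
    rwa [Real.sqrt_sq (by positivity)] at h2
  refine ⟨Real.exp (lam * T) * (12 / σ), by positivity, ?_⟩
  intro b ν μ hbmeas hbbd hνmeas hνint hνbdd hμcont hμint hμbdd hmild
  set N : ℝ := supL1 T ν with hN_def
  set N' : ENNReal := ENNReal.ofReal N with hN'_def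
  set Fμ : ℝ → ENNReal := fun s => ∫⁻ y in Ioi (0:ℝ), ENNReal.ofReal |μ y s| with hFμ_def
  have hμmeas : Measurable (fun p : ℝ × ℝ => μ p.1 p.2) := hμcont.measurable
  have hFμ_eq : ∀ s ∈ Icc (0:ℝ) T, Fμ s = ENNReal.ofReal (∫ y in Ioi (0:ℝ), |μ y s|) := by
    intro s hs
    rw [hFμ_def]
    rw [ofReal_integral_eq_lintegral_ofReal ((hμint s hs).abs)
      (Filter.Eventually.of_forall fun y => abs_nonneg _)]
  have hN0 : 0 ≤ N := by
    have h0 : (0:ℝ) ∈ Icc (0:ℝ) T := ⟨le_refl 0, hT.le⟩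
    have := le_csSup hνbdd ⟨0, h0, rfl⟩
    have h2 : (0:ℝ) ≤ ∫ x in Ioi (0:ℝ), |ν x 0| :=
      integral_nonneg fun x => abs_nonneg _
    exact le_trans h2 this
  have hNν : ∀ s ∈ Icc (0:ℝ) T, ∫⁻ y in Ioi (0:ℝ), ENNReal.ofReal |ν y s| ≤ N' := by
    intro s hs
    rw [← ofReal_integral_eq_lintegral_ofReal ((hνint s hs).abs)
      (Filter.Eventually.of_forall fun y => abs_nonneg _)]
    exact ENNReal.ofReal_le_ofReal (le_csSup hνbdd ⟨s, hs, rfl⟩)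
  set Mμ : ℝ := sSup ((fun t => ∫ x in Ioi (0:ℝ), |μ x t|) '' Icc 0 T) with hMμ_def
  have hFμ_bdd : ∀ s ∈ Icc (0:ℝ) T, Fμ s ≤ ENNReal.ofReal Mμ := by
    intro s hs
    rw [hFμ_eq s hs]
    exact ENNReal.ofReal_le_ofReal (le_csSup hμbdd ⟨s, hs, rfl⟩)
  -- the main integral inequality (★)
  have hstar : ∀ t ∈ Icc (0:ℝ) T, Fμ t ≤
      ∫⁻ s in Ioc (0:ℝ) t, ENNReal.ofReal (2 / (σ * Real.sqrt (t - s))) *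
        (ENNReal.ofReal Mb * Fμ s + N') := by
    intro t ht
    set F : ℝ → ℝ → ℝ → ENNReal := fun x s y =>
      ENNReal.ofReal |(heatKx σ (x - y) (t - s) + heatKx σ (x + y) (t - s)) *
        (b y s * μ y s + ν y s)| with hF_def
    have hFmeas : Measurable (fun q : (ℝ × ℝ) × ℝ => F q.1.1 q.1.2 q.2) := by
      apply ENNReal.measurable_ofReal.comp
      apply Measurable.abs
      apply Measurable.mul
      · apply Measurable.add
        · exact (measurable_heatKx σ hσ).comp
            ((measurable_fst.fst.sub measurable_snd).prodMk
              (measurable_const.sub measurable_fst.snd))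
        · exact (measurable_heatKx σ hσ).comp
            ((measurable_fst.fst.add measurable_snd).prodMk
              (measurable_const.sub measurable_fst.snd))
      · apply Measurable.add
        · exact (hbmeas.comp (measurable_snd.prodMk measurable_fst.snd)).mul
            (hμmeas.comp (measurable_snd.prodMk measurable_fst.snd))
        · exact hνmeas.comp (measurable_snd.prodMk measurable_fst.snd)
    -- Step A : pointwise bound for x > 0
    have hA : ∀ x ∈ Ioi (0:ℝ), ENNReal.ofReal |μ x t| ≤
        ∫⁻ s in Ioc (0:ℝ) t, ∫⁻ y in Ioi (0:ℝ), F x s y := by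
      intro x hx
      rw [hmild x (mem_Ici.2 (le_of_lt hx)) t ht, intervalIntegral.integral_of_le ht.1,
        ← Real.enorm_eq_ofReal_abs]
      refine le_trans (enorm_integral_le_lintegral_enorm _) ?_
      refine lintegral_mono fun s => ?_
      refine le_trans (enorm_integral_le_lintegral_enorm _) ?_
      refine lintegral_mono fun y => ?_
      rw [Real.enorm_eq_ofReal_abs]
    -- Step C : swap the integrals
    have hswap : ∫⁻ x in Ioi (0:ℝ), ∫⁻ s in Ioc (0:ℝ) t, ∫⁻ y in Ioi (0:ℝ), F x s y =
        ∫⁻ s in Ioc (0:ℝ) t, ∫⁻ y in Ioi (0:ℝ), ∫⁻ x in Ioi (0:ℝ), F x s y := by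
      have hswap1 : ∫⁻ x in Ioi (0:ℝ), ∫⁻ s in Ioc (0:ℝ) t, ∫⁻ y in Ioi (0:ℝ), F x s y =
          ∫⁻ s in Ioc (0:ℝ) t, ∫⁻ x in Ioi (0:ℝ), ∫⁻ y in Ioi (0:ℝ), F x s y := by
        apply lintegral_lintegral_swap
        exact (Measurable.lintegral_prod_right' hFmeas).aemeasurable
      rw [hswap1]
      refine lintegral_congr fun s => ?_
      apply lintegral_lintegral_swap
      exact (hFmeas.comp ((measurable_fst.prodMk measurable_const).prodMk
        measurable_snd)).aemeasurable
    -- Step D : bound the inner x-integral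
    have hD : ∀ s y : ℝ, ∫⁻ x in Ioi (0:ℝ), F x s y ≤
        ENNReal.ofReal (2 / (σ * Real.sqrt (t - s))) *
          ENNReal.ofReal |b y s * μ y s + ν y s| := by
      intro s y
      have heq : ∀ x : ℝ, F x s y =
          ENNReal.ofReal |heatKx σ (x - y) (t - s) + heatKx σ (x + y) (t - s)| *
            ENNReal.ofReal |b y s * μ y s + ν y s| := by
        intro x
        rw [hF_def]
        simp only [abs_mul, ENNReal.ofReal_mul (abs_nonneg _)]
      calc ∫⁻ x in Ioi (0:ℝ), F x s y
          = (∫⁻ x in Ioi (0:ℝ),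
              ENNReal.ofReal |heatKx σ (x - y) (t - s) + heatKx σ (x + y) (t - s)|) *
              ENNReal.ofReal |b y s * μ y s + ν y s| := by
            simp_rw [heq]
            exact lintegral_mul_const' _ _ ENNReal.ofReal_ne_top
        _ ≤ ENNReal.ofReal (2 / (σ * Real.sqrt (t - s))) *
              ENNReal.ofReal |b y s * μ y s + ν y s| := by
            apply mul_le_mul_left
            have hm1 : Measurable fun x : ℝ => ENNReal.ofReal |heatKx σ (x - y) (t - s)| :=
              ENNReal.measurable_ofReal.comp (((measurable_heatKx σ hσ).comp
                ((measurable_id.sub measurable_const).prodMk measurable_const)).abs)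
            calc ∫⁻ x in Ioi (0:ℝ),
                  ENNReal.ofReal |heatKx σ (x - y) (t - s) + heatKx σ (x + y) (t - s)|
                ≤ ∫⁻ x in Ioi (0:ℝ), (ENNReal.ofReal |heatKx σ (x - y) (t - s)| +
                    ENNReal.ofReal |heatKx σ (x + y) (t - s)|) := by
                  refine lintegral_mono fun x => ?_
                  rw [← ENNReal.ofReal_add (abs_nonneg _) (abs_nonneg _)]
                  exact ENNReal.ofReal_le_ofReal (abs_add_le _ _)
              _ = (∫⁻ x in Ioi (0:ℝ), ENNReal.ofReal |heatKx σ (x - y) (t - s)|) +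
                    ∫⁻ x in Ioi (0:ℝ), ENNReal.ofReal |heatKx σ (x + y) (t - s)| :=
                  lintegral_add_left hm1 _
              _ ≤ ENNReal.ofReal (1 / (σ * Real.sqrt (t - s))) +
                    ENNReal.ofReal (1 / (σ * Real.sqrt (t - s))) := by
                  gcongr
                  · have := kerInt σ (t - s) (-y) hσ
                    simpa [sub_eq_add_neg] using this
                  · exact kerInt σ (t - s) y hσ
              _ = ENNReal.ofReal (2 / (σ * Real.sqrt (t - s))) := by
                  rw [← ENNReal.ofReal_add (by positivity) (by positivity)]
                  congr 1
                  rw [← add_div]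
                  norm_num
    -- Step D' : bound the y-integral
    have hD' : ∀ s ∈ Ioc (0:ℝ) t,
        ∫⁻ y in Ioi (0:ℝ), ENNReal.ofReal |b y s * μ y s + ν y s| ≤
          ENNReal.ofReal Mb * Fμ s + N' := by
      intro s hs
      have hsIcc : s ∈ Icc (0:ℝ) T := ⟨hs.1.le, le_trans hs.2 ht.2⟩
      have hmono : ∀ y : ℝ, ENNReal.ofReal |b y s * μ y s + ν y s| ≤
          ENNReal.ofReal Mb * ENNReal.ofReal |μ y s| + ENNReal.ofReal |ν y s| := by
        intro y
        rw [← ENNReal.ofReal_mul hMb, ← ENNReal.ofReal_add (by positivity) (abs_nonneg _)]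
        apply ENNReal.ofReal_le_ofReal
        calc |b y s * μ y s + ν y s| ≤ |b y s * μ y s| + |ν y s| := abs_add_le _ _
          _ ≤ Mb * |μ y s| + |ν y s| := by
              rw [abs_mul]
              exact add_le_add_left (mul_le_mul_of_nonneg_right (hbbd y s) (abs_nonneg _)) _
      calc ∫⁻ y in Ioi (0:ℝ), ENNReal.ofReal |b y s * μ y s + ν y s|
          ≤ ∫⁻ y in Ioi (0:ℝ), (ENNReal.ofReal Mb * ENNReal.ofReal |μ y s| +
              ENNReal.ofReal |ν y s|) := lintegral_mono hmono
        _ = ENNReal.ofReal Mb * Fμ s + ∫⁻ y in Ioi (0:ℝ), ENNReal.ofReal |ν y s| := by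
            have hmμ : Measurable fun y : ℝ => ENNReal.ofReal |μ y s| :=
              ENNReal.measurable_ofReal.comp
                ((hμmeas.comp (measurable_id.prodMk measurable_const)).abs)
            rw [lintegral_add_left (hmμ.const_mul _), lintegral_const_mul _ hmμ]
        _ ≤ ENNReal.ofReal Mb * Fμ s + N' := add_le_add_right (hNν s hsIcc) _
    -- assemble
    calc Fμ t ≤ ∫⁻ x in Ioi (0:ℝ), ∫⁻ s in Ioc (0:ℝ) t, ∫⁻ y in Ioi (0:ℝ), F x s y := by
          rw [hFμ_def]
          refine lintegral_mono_ae ((ae_restrict_iff' measurableSet_Ioi).2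
            (Filter.Eventually.of_forall ?_))
          exact hA
      _ = ∫⁻ s in Ioc (0:ℝ) t, ∫⁻ y in Ioi (0:ℝ), ∫⁻ x in Ioi (0:ℝ), F x s y := hswap
      _ ≤ ∫⁻ s in Ioc (0:ℝ) t, ENNReal.ofReal (2 / (σ * Real.sqrt (t - s))) *
            (ENNReal.ofReal Mb * Fμ s + N') := by
          refine lintegral_mono_ae ((ae_restrict_iff' measurableSet_Ioc).2
            (Filter.Eventually.of_forall ?_))
          intro s hs
          calc ∫⁻ y in Ioi (0:ℝ), ∫⁻ x in Ioi (0:ℝ), F x s y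
              ≤ ∫⁻ y in Ioi (0:ℝ), ENNReal.ofReal (2 / (σ * Real.sqrt (t - s))) *
                  ENNReal.ofReal |b y s * μ y s + ν y s| := lintegral_mono fun y => hD s y
            _ = ENNReal.ofReal (2 / (σ * Real.sqrt (t - s))) *
                  ∫⁻ y in Ioi (0:ℝ), ENNReal.ofReal |b y s * μ y s + ν y s| :=
                lintegral_const_mul' _ _ ENNReal.ofReal_ne_top
            _ ≤ ENNReal.ofReal (2 / (σ * Real.sqrt (t - s))) *
                  (ENNReal.ofReal Mb * Fμ s + N') := mul_le_mul_right (hD' s hs) _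
  -- Gronwall via exponential weight
  set L : ENNReal := ⨆ s : Icc (0:ℝ) T, ENNReal.ofReal (Real.exp (-(lam * s))) * Fμ s
    with hL_def
  have hL_ne_top : L ≠ ⊤ := by
    have hb : L ≤ ENNReal.ofReal Mμ := by
      rw [hL_def]
      refine iSup_le fun s => ?_
      calc ENNReal.ofReal (Real.exp (-(lam * s))) * Fμ s
          ≤ 1 * ENNReal.ofReal Mμ := by
            gcongr
            · refine le_trans (ENNReal.ofReal_le_ofReal (Real.exp_le_one_iff.2 ?_)) (by simp)
              have : (0:ℝ) ≤ (s:ℝ) := s.2.1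
              nlinarith
            · exact hFμ_bdd s s.2
        _ = ENNReal.ofReal Mμ := one_mul _
    exact ne_top_of_le_ne_top ENNReal.ofReal_ne_top hb
  have hFle : ∀ s ∈ Icc (0:ℝ) T, Fμ s ≤ ENNReal.ofReal (Real.exp (lam * s)) * L := by
    intro s hs
    have h1 : Fμ s = ENNReal.ofReal (Real.exp (lam * s)) *
        (ENNReal.ofReal (Real.exp (-(lam * s))) * Fμ s) := by
      rw [← mul_assoc, ← ENNReal.ofReal_mul (Real.exp_nonneg _), ← Real.exp_add]
      simp
    rw [h1]
    refine mul_le_mul_right ?_ _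
    exact le_iSup (fun s : Icc (0:ℝ) T => ENNReal.ofReal (Real.exp (-(lam * s))) * Fμ s) ⟨s, hs⟩
  set D' : ENNReal := ENNReal.ofReal (6 / σ) with hD'_def
  have hweight : ∀ t ∈ Icc (0:ℝ) T,
      ENNReal.ofReal (Real.exp (-(lam * t))) * Fμ t ≤
        ENNReal.ofReal (1/2) * L + D' * N' := by
    intro t ht
    have ht0 : (0:ℝ) ≤ t := ht.1
    -- refine (★) by hFle
    have hstep : Fμ t ≤
        ENNReal.ofReal (2 * Mb / σ * (Real.exp (lam * t) * (3 / Real.sqrt lam))) * L +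
        ENNReal.ofReal (2 / σ * (Real.exp (lam * t) * (3 / Real.sqrt lam))) * N' := by
      have hpt : ∀ s ∈ Ioc (0:ℝ) t,
          ENNReal.ofReal (2 / (σ * Real.sqrt (t - s))) * (ENNReal.ofReal Mb * Fμ s + N') ≤
          ENNReal.ofReal (2 * Mb / σ * (Real.exp (lam * s) / Real.sqrt (t - s))) * L +
            ENNReal.ofReal (2 / σ * (Real.exp (lam * s) / Real.sqrt (t - s))) * N' := by
        intro s hs
        have hsIcc : s ∈ Icc (0:ℝ) T := ⟨hs.1.le, le_trans hs.2 ht.2⟩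
        have hexp1 : (1:ℝ) ≤ Real.exp (lam * s) :=
          Real.one_le_exp (mul_nonneg hlam0.le hs.1.le)
        have h2 : ENNReal.ofReal Mb * Fμ s + N' ≤
            ENNReal.ofReal (Mb * Real.exp (lam * s)) * L + N' := by
          refine add_le_add_left ?_ _
          rw [ENNReal.ofReal_mul hMb, mul_assoc]
          exact mul_le_mul_right (hFle s hsIcc) _
        refine le_trans (mul_le_mul_right h2 _) ?_
        rw [mul_add]
        refine add_le_add ?_ ?_
        · rw [← mul_assoc, ← ENNReal.ofReal_mul (by positivity)]
          refine mul_le_mul_left (ENNReal.ofReal_le_ofReal (le_of_eq (by ring))) _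
        · refine mul_le_mul_left (ENNReal.ofReal_le_ofReal ?_) _
          rcases eq_or_lt_of_le (Real.sqrt_nonneg (t - s)) with h0 | h0
          · rw [← h0]
            simp
          · have key : 1 / Real.sqrt (t - s) ≤ Real.exp (lam * s) / Real.sqrt (t - s) :=
              (div_le_div_iff_of_pos_right h0).2 hexp1
            calc 2 / (σ * Real.sqrt (t - s)) = 2 / σ * (1 / Real.sqrt (t - s)) := by ring
              _ ≤ 2 / σ * (Real.exp (lam * s) / Real.sqrt (t - s)) :=
                  mul_le_mul_of_nonneg_left key (by positivity)
      have hmeasf1 : Measurable fun s : ℝ =>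
          ENNReal.ofReal (2 * Mb / σ * (Real.exp (lam * s) / Real.sqrt (t - s))) := by
        apply ENNReal.measurable_ofReal.comp
        apply Measurable.const_mul
        exact (Real.measurable_exp.comp (measurable_id.const_mul lam)).div
          (Real.continuous_sqrt.measurable.comp (measurable_const.sub measurable_id))
      have hmeasf2 : Measurable fun s : ℝ =>
          ENNReal.ofReal (2 / σ * (Real.exp (lam * s) / Real.sqrt (t - s))) := by
        apply ENNReal.measurable_ofReal.comp
        apply Measurable.const_mul
        exact (Real.measurable_exp.comp (measurable_id.const_mul lam)).div
          (Real.continuous_sqrt.measurable.comp (measurable_const.sub measurable_id))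
      have htime1 : ∫⁻ s in Ioc (0:ℝ) t,
          ENNReal.ofReal (2 * Mb / σ * (Real.exp (lam * s) / Real.sqrt (t - s))) ≤
          ENNReal.ofReal (2 * Mb / σ * (Real.exp (lam * t) * (3 / Real.sqrt lam))) := by
        have hpull : ∀ s : ℝ, ENNReal.ofReal (2 * Mb / σ * (Real.exp (lam * s) / Real.sqrt (t - s)))
            = ENNReal.ofReal (2 * Mb / σ) *
              ENNReal.ofReal (Real.exp (lam * s) / Real.sqrt (t - s)) := fun s =>
          ENNReal.ofReal_mul (by positivity)
        simp_rw [hpull]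
        rw [lintegral_const_mul' _ _ ENNReal.ofReal_ne_top,
          ENNReal.ofReal_mul (by positivity)]
        exact mul_le_mul_right (timeInt lam t hlam1 ht0) _
      have htime2 : ∫⁻ s in Ioc (0:ℝ) t,
          ENNReal.ofReal (2 / σ * (Real.exp (lam * s) / Real.sqrt (t - s))) ≤
          ENNReal.ofReal (2 / σ * (Real.exp (lam * t) * (3 / Real.sqrt lam))) := by
        have hpull : ∀ s : ℝ, ENNReal.ofReal (2 / σ * (Real.exp (lam * s) / Real.sqrt (t - s)))
            = ENNReal.ofReal (2 / σ) *
              ENNReal.ofReal (Real.exp (lam * s) / Real.sqrt (t - s)) := fun s =>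
          ENNReal.ofReal_mul (by positivity)
        simp_rw [hpull]
        rw [lintegral_const_mul' _ _ ENNReal.ofReal_ne_top,
          ENNReal.ofReal_mul (by positivity)]
        exact mul_le_mul_right (timeInt lam t hlam1 ht0) _
      calc Fμ t ≤ ∫⁻ s in Ioc (0:ℝ) t, ENNReal.ofReal (2 / (σ * Real.sqrt (t - s))) *
            (ENNReal.ofReal Mb * Fμ s + N') := hstar t ht
        _ ≤ ∫⁻ s in Ioc (0:ℝ) t,
            (ENNReal.ofReal (2 * Mb / σ * (Real.exp (lam * s) / Real.sqrt (t - s))) * L +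
              ENNReal.ofReal (2 / σ * (Real.exp (lam * s) / Real.sqrt (t - s))) * N') := by
            refine lintegral_mono_ae ((ae_restrict_iff' measurableSet_Ioc).2
              (Filter.Eventually.of_forall ?_))
            exact hpt
        _ = (∫⁻ s in Ioc (0:ℝ) t,
              ENNReal.ofReal (2 * Mb / σ * (Real.exp (lam * s) / Real.sqrt (t - s)))) * L +
            (∫⁻ s in Ioc (0:ℝ) t,
              ENNReal.ofReal (2 / σ * (Real.exp (lam * s) / Real.sqrt (t - s)))) * N' := by
            rw [lintegral_add_left (hmeasf1.mul_const L),
              lintegral_mul_const' _ _ hL_ne_top,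
              lintegral_mul_const' _ _ ENNReal.ofReal_ne_top]
        _ ≤ ENNReal.ofReal (2 * Mb / σ * (Real.exp (lam * t) * (3 / Real.sqrt lam))) * L +
            ENNReal.ofReal (2 / σ * (Real.exp (lam * t) * (3 / Real.sqrt lam))) * N' := by
            gcongr
    -- multiply through by the weight
    have hw1 : ENNReal.ofReal (Real.exp (-(lam * t))) *
        (ENNReal.ofReal (2 * Mb / σ * (Real.exp (lam * t) * (3 / Real.sqrt lam))) * L) ≤
        ENNReal.ofReal (1/2) * L := by
      rw [← mul_assoc, ← ENNReal.ofReal_mul (Real.exp_nonneg _)]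
      refine mul_le_mul_left (ENNReal.ofReal_le_ofReal ?_) _
      have hc : Real.exp (-(lam * t)) * (2 * Mb / σ * (Real.exp (lam * t) * (3 / Real.sqrt lam)))
          = 6 * Mb / (σ * Real.sqrt lam) *
            (Real.exp (-(lam * t)) * Real.exp (lam * t)) := by ring
      rw [hc, ← Real.exp_add, neg_add_cancel, Real.exp_zero, mul_one]
      have hsq0 : (0:ℝ) < Real.sqrt lam := lt_of_lt_of_le one_pos hsqlam1
      rw [div_le_iff₀ (by positivity : (0:ℝ) < σ * Real.sqrt lam)]
      have h12 : 12 * Mb = σ * (12 * Mb / σ) := by field_simp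
      have h13 : σ * (12 * Mb / σ) ≤ σ * Real.sqrt lam :=
        mul_le_mul_of_nonneg_left hsqlam hσ.le
      nlinarith
    have hw2 : ENNReal.ofReal (Real.exp (-(lam * t))) *
        (ENNReal.ofReal (2 / σ * (Real.exp (lam * t) * (3 / Real.sqrt lam))) * N') ≤
        D' * N' := by
      rw [← mul_assoc, ← ENNReal.ofReal_mul (Real.exp_nonneg _)]
      refine mul_le_mul_left (ENNReal.ofReal_le_ofReal ?_) _
      have hc : Real.exp (-(lam * t)) * (2 / σ * (Real.exp (lam * t) * (3 / Real.sqrt lam)))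
          = 6 / (σ * Real.sqrt lam) * (Real.exp (-(lam * t)) * Real.exp (lam * t)) := by ring
      rw [hc, ← Real.exp_add, neg_add_cancel, Real.exp_zero, mul_one]
      have hσlam : σ ≤ σ * Real.sqrt lam := by nlinarith
      calc 6 / (σ * Real.sqrt lam) ≤ 6 / σ :=
            div_le_div_of_nonneg_left (by norm_num) hσ hσlam
        _ = 6 / σ := rfl
    calc ENNReal.ofReal (Real.exp (-(lam * t))) * Fμ t
        ≤ ENNReal.ofReal (Real.exp (-(lam * t))) *
            (ENNReal.ofReal (2 * Mb / σ * (Real.exp (lam * t) * (3 / Real.sqrt lam))) * L +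
             ENNReal.ofReal (2 / σ * (Real.exp (lam * t) * (3 / Real.sqrt lam))) * N') :=
          mul_le_mul_right hstep _
      _ = ENNReal.ofReal (Real.exp (-(lam * t))) *
            (ENNReal.ofReal (2 * Mb / σ * (Real.exp (lam * t) * (3 / Real.sqrt lam))) * L) +
          ENNReal.ofReal (Real.exp (-(lam * t))) *
            (ENNReal.ofReal (2 / σ * (Real.exp (lam * t) * (3 / Real.sqrt lam))) * N') :=
          mul_add _ _ _
      _ ≤ ENNReal.ofReal (1/2) * L + D' * N' := add_le_add hw1 hw2
  -- conclude : L ≤ ofReal ((12/σ) * N)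
  have hhalf : L ≤ ENNReal.ofReal (1/2) * L + D' * N' := by
    rw [hL_def]
    exact iSup_le fun s => hweight s s.2
  have hLbound : L ≤ ENNReal.ofReal (12 / σ * N) := by
    have hRne : ENNReal.ofReal (1/2) * L + D' * N' ≠ ⊤ :=
      ENNReal.add_ne_top.2 ⟨ENNReal.mul_ne_top ENNReal.ofReal_ne_top hL_ne_top,
        ENNReal.mul_ne_top ENNReal.ofReal_ne_top ENNReal.ofReal_ne_top⟩
    have h1 := ENNReal.toReal_mono hRne hhalf
    rw [ENNReal.toReal_add (ENNReal.mul_ne_top ENNReal.ofReal_ne_top hL_ne_top)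
        (ENNReal.mul_ne_top ENNReal.ofReal_ne_top ENNReal.ofReal_ne_top),
      ENNReal.toReal_mul, ENNReal.toReal_mul, ENNReal.toReal_ofReal (by norm_num : (0:ℝ) ≤ 1/2),
      ENNReal.toReal_ofReal (by positivity : (0:ℝ) ≤ 6/σ),
      ENNReal.toReal_ofReal hN0] at h1
    have h2 : L.toReal ≤ 12 / σ * N := by
      have h3 : 12 / σ * N = 2 * (6 / σ * N) := by ring
      linarith
    calc L = ENNReal.ofReal L.toReal := (ENNReal.ofReal_toReal hL_ne_top).symm
      _ ≤ ENNReal.ofReal (12 / σ * N) := ENNReal.ofReal_le_ofReal h2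
  -- final conclusion
  intro t ht
  have hfin : ENNReal.ofReal (∫ x in Ioi (0:ℝ), |μ x t|) ≤
      ENNReal.ofReal (Real.exp (lam * T) * (12 / σ) * N) := by
    calc ENNReal.ofReal (∫ x in Ioi (0:ℝ), |μ x t|) = Fμ t := (hFμ_eq t ht).symm
      _ ≤ ENNReal.ofReal (Real.exp (lam * t)) * L := hFle t ht
      _ ≤ ENNReal.ofReal (Real.exp (lam * t)) * ENNReal.ofReal (12 / σ * N) :=
          mul_le_mul_right hLbound _
      _ = ENNReal.ofReal (Real.exp (lam * t) * (12 / σ * N)) :=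
          (ENNReal.ofReal_mul (Real.exp_nonneg _)).symm
      _ ≤ ENNReal.ofReal (Real.exp (lam * T) * (12 / σ) * N) := by
          apply ENNReal.ofReal_le_ofReal
          have hexp : Real.exp (lam * t) ≤ Real.exp (lam * T) :=
            Real.exp_le_exp.2 (mul_le_mul_of_nonneg_left ht.2 hlam0.le)
          have hnn : (0:ℝ) ≤ 12 / σ * N := by positivity
          nlinarith
  have hCN : (0:ℝ) ≤ Real.exp (lam * T) * (12 / σ) * N := by positivity
  exact (ENNReal.ofReal_le_ofReal_iff hCN).1 hfin
end
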